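/- arXiv:2210.13131 — 9 statements merged into one kernel-verified Lean document; each statement's English description precedes it below -/
import Mathlib

section
/- Let a, b > 0 and x_l < x_r be real numbers, and let u : ℝ × ℝ → ℝ be infinitely differentiable and satisfy b ∂ₜ²u(x,t) = −a ∂ₓ⁴u(x,t) for all x ∈ [x_l, x_r] and all t ∈ ℝ, together with the homogeneous free boundary conditions ∂ₓ²u(x_l,t) = ∂ₓ²u(x_r,t) = 0 and ∂ₓ³u(x_l,t) = ∂ₓ³u(x_r,t) = 0 for all t. Then the energy E(t) is constant in t. -/
open MeasureTheory intervalIntegral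


open MeasureTheory intervalIntegral

noncomputable def pX (f : ℝ × ℝ → ℝ) : ℝ × ℝ → ℝ := fun p => fderiv ℝ f p (1, 0)
noncomputable def pT (f : ℝ × ℝ → ℝ) : ℝ × ℝ → ℝ := fun p => fderiv ℝ f p (0, 1)

lemma apply_fderiv (f : ℝ × ℝ → ℝ) (v : ℝ × ℝ) :
    (fun p => fderiv ℝ f p v) = fun p =>
      (ContinuousLinearMap.apply ℝ ℝ v) (fderiv ℝ f p) := rfl

lemma pX_contDiff {f : ℝ × ℝ → ℝ} (hf : ContDiff ℝ (⊤ : ℕ∞) f) :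
    ContDiff ℝ (⊤ : ℕ∞) (pX f) := by
  have h := hf.fderiv_right (m := (⊤ : ℕ∞)) (le_of_eq (by simp))
  exact h.clm_apply contDiff_const

lemma pT_contDiff {f : ℝ × ℝ → ℝ} (hf : ContDiff ℝ (⊤ : ℕ∞) f) :
    ContDiff ℝ (⊤ : ℕ∞) (pT f) := by
  have h := hf.fderiv_right (m := (⊤ : ℕ∞)) (le_of_eq (by simp))
  exact h.clm_apply contDiff_const

lemma hasDerivAt_pX {f : ℝ × ℝ → ℝ} (hf : ContDiff ℝ (⊤ : ℕ∞) f) (x t : ℝ) :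
    HasDerivAt (fun y => f (y, t)) (pX f (x, t)) x := by
  have h1 : HasFDerivAt f (fderiv ℝ f (x, t)) (x, t) :=
    (hf.differentiable (by simp) (x, t)).hasFDerivAt
  have h2 : HasDerivAt (fun y : ℝ => (y, t)) ((1 : ℝ), (0 : ℝ)) x :=
    (hasDerivAt_id x).prodMk (hasDerivAt_const x t)
  exact h1.comp_hasDerivAt x h2

lemma hasDerivAt_pT {f : ℝ × ℝ → ℝ} (hf : ContDiff ℝ (⊤ : ℕ∞) f) (x t : ℝ) :
    HasDerivAt (fun s => f (x, s)) (pT f (x, t)) t := by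
  have h1 : HasFDerivAt f (fderiv ℝ f (x, t)) (x, t) :=
    (hf.differentiable (by simp) (x, t)).hasFDerivAt
  have h2 : HasDerivAt (fun s : ℝ => (x, s)) ((0 : ℝ), (1 : ℝ)) t :=
    (hasDerivAt_const t x).prodMk (hasDerivAt_id t)
  exact h1.comp_hasDerivAt t h2

lemma pT_pX_comm {f : ℝ × ℝ → ℝ} (hf : ContDiff ℝ (⊤ : ℕ∞) f) (p : ℝ × ℝ) :
    pT (pX f) p = pX (pT f) p := by
  have hdf : ContDiff ℝ (⊤ : ℕ∞) (fderiv ℝ f) :=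
    hf.fderiv_right (m := (⊤ : ℕ∞)) (le_of_eq (by simp))
  have hfd : HasFDerivAt (fderiv ℝ f) (fderiv ℝ (fderiv ℝ f) p) p :=
    (hdf.differentiable (by simp) p).hasFDerivAt
  have key : ∀ v w : ℝ × ℝ, fderiv ℝ (fun q => fderiv ℝ f q v) p w =
      fderiv ℝ (fderiv ℝ f) p w v := by
    intro v w
    have : HasFDerivAt (fun q => fderiv ℝ f q v)
        ((ContinuousLinearMap.apply ℝ ℝ v).comp (fderiv ℝ (fderiv ℝ f) p)) p :=
      (ContinuousLinearMap.apply ℝ ℝ v).hasFDerivAt.comp p hfd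
    rw [this.fderiv]; rfl
  have hsym : ∀ v w : ℝ × ℝ,
      fderiv ℝ (fderiv ℝ f) p v w = fderiv ℝ (fderiv ℝ f) p w v := by
    intro v w
    exact second_derivative_symmetric
      (fun y => (hf.differentiable (by simp) y).hasFDerivAt) hfd v w
  show fderiv ℝ (fun q => fderiv ℝ f q (1,0)) p (0,1)
      = fderiv ℝ (fun q => fderiv ℝ f q (0,1)) p (1,0)
  rw [key, key, hsym]

lemma pX_iter_contDiff {f : ℝ × ℝ → ℝ} (hf : ContDiff ℝ (⊤ : ℕ∞) f) (n : ℕ) :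
    ContDiff ℝ (⊤ : ℕ∞) (pX^[n] f) := by
  induction n with
  | zero => exact hf
  | succ n ih => rw [Function.iterate_succ_apply']; exact pX_contDiff ih

lemma iteratedDeriv_section (n : ℕ) : ∀ {f : ℝ × ℝ → ℝ}, ContDiff ℝ (⊤ : ℕ∞) f →
    ∀ t x, iteratedDeriv n (fun y => f (y, t)) x = pX^[n] f (x, t) := by
  induction n with
  | zero => intro f hf t x; simp
  | succ n ih =>
    intro f hf t x
    rw [iteratedDeriv_succ']
    have hd : deriv (fun y => f (y, t)) = fun y => pX f (y, t) :=
      funext fun y => (hasDerivAt_pX hf y t).deriv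
    rw [hd, ih (pX_contDiff hf) t x, Function.iterate_succ_apply]


/-- Energy conservation for the constant-coefficient dynamic beam equation
`b ∂ₜ²u = −a ∂ₓ⁴u` on `[x_l, x_r]` with homogeneous free boundary conditions. -/
theorem dbe_energy_conservation_free
    (a b xl xr : ℝ) (ha : 0 < a) (hb : 0 < b) (hx : xl < xr)
    (u : ℝ → ℝ → ℝ)
    (hu : ContDiff ℝ (⊤ : ℕ∞) (Function.uncurry u))
    (hpde : ∀ x ∈ Set.Icc xl xr, ∀ t : ℝ,
      b * deriv (deriv (u x)) t = -a * iteratedDeriv 4 (fun y => u y t) x)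
    (hbc_l : ∀ t : ℝ, iteratedDeriv 2 (fun y => u y t) xl = 0)
    (hbc_r : ∀ t : ℝ, iteratedDeriv 2 (fun y => u y t) xr = 0)
    (hbc_lx : ∀ t : ℝ, iteratedDeriv 3 (fun y => u y t) xl = 0)
    (hbc_rx : ∀ t : ℝ, iteratedDeriv 3 (fun y => u y t) xr = 0)
    (E : ℝ → ℝ)
    (hE : ∀ t : ℝ, E t = ∫ x in xl..xr,
      b * (deriv (u x) t) ^ 2 + a * (iteratedDeriv 2 (fun y => u y t) x) ^ 2) :
    ∀ t s : ℝ, E t = E s := by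
  have hu' : ContDiff ℝ (⊤ : ℕ∞) (Function.uncurry u) := hu.of_le (by simp)
  set U : ℝ × ℝ → ℝ := Function.uncurry u with hUdef
  -- basic smoothness
  have hv : ContDiff ℝ (⊤ : ℕ∞) (pT U) := pT_contDiff hu'
  have hw : ContDiff ℝ (⊤ : ℕ∞) (pX (pX U)) := pX_contDiff (pX_contDiff hu')
  have hvt : ContDiff ℝ (⊤ : ℕ∞) (pT (pT U)) := pT_contDiff hv
  have hwt : ContDiff ℝ (⊤ : ℕ∞) (pT (pX (pX U))) := pT_contDiff hw
  -- translation lemmas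
  have R1 : ∀ x t : ℝ, deriv (u x) t = pT U (x, t) := by
    intro x t
    exact (hasDerivAt_pT hu' x t).deriv
  have R2 : ∀ x t : ℝ, deriv (deriv (u x)) t = pT (pT U) (x, t) := by
    intro x t
    have h : deriv (u x) = fun s => pT U (x, s) := funext fun s => R1 x s
    rw [h]
    exact (hasDerivAt_pT hv x t).deriv
  have R3 : ∀ (n : ℕ) (t x : ℝ),
      iteratedDeriv n (fun y => u y t) x = pX^[n] U (x, t) := by
    intro n t x
    exact iteratedDeriv_section n hu' t x
  -- commuted mixed partials: pT (pX (pX U)) = pX (pX (pT U))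
  have e1 : pT (pX U) = pX (pT U) := funext (pT_pX_comm hu')
  have e2 : pT (pX (pX U)) = pX (pX (pT U)) := by
    have h := funext (pT_pX_comm (pX_contDiff hu'))
    rw [h, e1]
  -- PDE in partial-derivative form
  have hpde' : ∀ x ∈ Set.Icc xl xr, ∀ t : ℝ,
      b * pT (pT U) (x, t) = -a * pX (pX (pX (pX U))) (x, t) := by
    intro x hxm t
    have := hpde x hxm t
    rwa [R2, R3] at this
  -- the t-derivative of the energy integrand
  set G : ℝ → ℝ → ℝ := fun τ x =>
      2 * b * pT U (x, τ) * pT (pT U) (x, τ)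
        + 2 * a * pX (pX U) (x, τ) * pT (pX (pX U)) (x, τ) with hGdef
  have hder : ∀ (x τ : ℝ),
      HasDerivAt (fun σ => b * pT U (x, σ) ^ 2 + a * pX (pX U) (x, σ) ^ 2)
        (G τ x) τ := by
    intro x τ
    have h1 := (hasDerivAt_pT hv x τ).pow 2
    have h2 := (hasDerivAt_pT hw x τ).pow 2
    have h := (h1.const_mul b).add (h2.const_mul a)
    refine h.congr_deriv ?_
    simp [hGdef]
    ring
  -- continuity facts
  have hcont2 : ∀ τ : ℝ, Continuous fun x =>
      b * pT U (x, τ) ^ 2 + a * pX (pX U) (x, τ) ^ 2 := by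
    intro τ
    have c1 : Continuous fun x : ℝ => (x, τ) := continuous_id.prodMk continuous_const
    exact (continuous_const.mul ((hv.continuous.comp c1).pow 2)).add
      (continuous_const.mul ((hw.continuous.comp c1).pow 2))
  have hGcont : Continuous fun p : ℝ × ℝ => G p.2 p.1 := by
    have c1 : Continuous fun p : ℝ × ℝ => (p.1, p.2) :=
      continuous_fst.prodMk continuous_snd
    simp only [hGdef]
    exact (((continuous_const.mul (hv.continuous.comp c1)).mul
        (hvt.continuous.comp c1)).add
      ((continuous_const.mul (hw.continuous.comp c1)).mul
        (hwt.continuous.comp c1)))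
  -- derivative of the energy integral is zero at every time
  have key : ∀ t0 : ℝ, HasDerivAt
      (fun τ => ∫ x in xl..xr, b * pT U (x, τ) ^ 2 + a * pX (pX U) (x, τ) ^ 2)
      0 t0 := by
    intro t0
    -- uniform bound on the parameter derivative near t0
    obtain ⟨C, hC⟩ : ∃ C, ∀ p ∈ (Set.Icc xl xr ×ˢ Set.Icc (t0 - 1) (t0 + 1)),
        ‖G p.2 p.1‖ ≤ C :=
      (isCompact_Icc.prod isCompact_Icc).exists_bound_of_continuousOn
        hGcont.continuousOn
    have hIoc : Set.uIoc xl xr ⊆ Set.Icc xl xr := by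
      rw [Set.uIoc_of_le hx.le]; exact Set.Ioc_subset_Icc_self
    have main := intervalIntegral.hasDerivAt_integral_of_dominated_loc_of_deriv_le
      (F := fun τ x => b * pT U (x, τ) ^ 2 + a * pX (pX U) (x, τ) ^ 2)
      (F' := fun τ x => G τ x) (bound := fun _ => C) (μ := volume)
      (a := xl) (b := xr) (x₀ := t0) (Metric.ball_mem_nhds t0 one_pos)
      (Filter.Eventually.of_forall fun τ =>
        (hcont2 τ).aestronglyMeasurable)
      ((hcont2 t0).intervalIntegrable xl xr)
      (by
        have c1 : Continuous fun x : ℝ => (x, t0) :=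
          continuous_id.prodMk continuous_const
        exact ((hGcont.comp c1).aestronglyMeasurable))
      (Filter.Eventually.of_forall (fun x hxm τ hτ => by
        apply hC (x, τ)
        refine ⟨hIoc hxm, ?_⟩
        have := Metric.mem_ball.mp hτ
        rw [Real.dist_eq] at this
        constructor <;> [linarith [abs_lt.mp this]; linarith [abs_lt.mp this]]))
      intervalIntegrable_const
      (Filter.Eventually.of_forall (fun x _ τ _ => hder x τ))
    have hst := main.2
    -- the derivative integrand is an exact x-derivative on [xl, xr]
    have hψder : ∀ x : ℝ, HasDerivAt
        (fun y => 2 * a * (pX (pX U) (y, t0) * pX (pT U) (y, t0)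
            - pX (pX (pX U)) (y, t0) * pT U (y, t0)))
        (2 * a * (pX (pX U) (x, t0) * pX (pX (pT U)) (x, t0)
            - pX (pX (pX (pX U))) (x, t0) * pT U (x, t0))) x := by
      intro x
      have h1 := hasDerivAt_pX hw x t0
      have h2 := hasDerivAt_pX (pX_contDiff hv) x t0
      have h3 := hasDerivAt_pX (pX_contDiff hw) x t0
      have h4 := hasDerivAt_pX hv x t0
      have combo := ((h1.mul h2).sub (h3.mul h4)).const_mul (2 * a)
      refine combo.congr_deriv ?_
      ring
    -- boundary values vanish
    have bl2 : pX (pX U) (xl, t0) = 0 := (R3 2 t0 xl).symm.trans (hbc_l t0)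
    have br2 : pX (pX U) (xr, t0) = 0 := (R3 2 t0 xr).symm.trans (hbc_r t0)
    have bl3 : pX (pX (pX U)) (xl, t0) = 0 := (R3 3 t0 xl).symm.trans (hbc_lx t0)
    have br3 : pX (pX (pX U)) (xr, t0) = 0 := (R3 3 t0 xr).symm.trans (hbc_rx t0)
    -- the integral of the t-derivative vanishes
    have hcongr : ∀ x ∈ Set.uIcc xl xr, G t0 x =
        2 * a * (pX (pX U) (x, t0) * pX (pX (pT U)) (x, t0)
          - pX (pX (pX (pX U))) (x, t0) * pT U (x, t0)) := by
      intro x hxm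
      rw [Set.uIcc_of_le hx.le] at hxm
      have hp := hpde' x hxm t0
      have e2x : pT (pX (pX U)) (x, t0) = pX (pX (pT U)) (x, t0) := by rw [e2]
      simp only [hGdef]
      rw [e2x]
      linear_combination (2 * pT U (x, t0)) * hp
    have hcψ : Continuous fun x : ℝ =>
        2 * a * (pX (pX U) (x, t0) * pX (pX (pT U)) (x, t0)
          - pX (pX (pX (pX U))) (x, t0) * pT U (x, t0)) := by
      have c1 : Continuous fun x : ℝ => (x, t0) :=
        continuous_id.prodMk continuous_const
      exact continuous_const.mul
        (((hw.continuous.comp c1).mul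
          ((pX_contDiff (pX_contDiff hv)).continuous.comp c1)).sub
         (((pX_contDiff (pX_contDiff hw)).continuous.comp c1).mul
          (hv.continuous.comp c1)))
    have hzero : (∫ x in xl..xr, G t0 x) = 0 := by
      rw [intervalIntegral.integral_congr hcongr,
        intervalIntegral.integral_eq_sub_of_hasDerivAt (fun x _ => hψder x)
          (hcψ.intervalIntegrable xl xr)]
      rw [bl2, br2, bl3, br3]
      ring
    rw [hzero] at hst
    exact hst
  -- conclude
  have hI : ∀ τ : ℝ, E τ =
      ∫ x in xl..xr, b * pT U (x, τ) ^ 2 + a * pX (pX U) (x, τ) ^ 2 := by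
    intro τ
    rw [hE τ]
    apply intervalIntegral.integral_congr
    intro x _
    show b * deriv (u x) τ ^ 2 + a * iteratedDeriv 2 (fun y => u y τ) x ^ 2
        = b * pT U (x, τ) ^ 2 + a * pX (pX U) (x, τ) ^ 2
    rw [R1, R3]
    rfl
  intro t s
  have hconst := is_const_of_deriv_eq_zero
    (f := fun τ => ∫ x in xl..xr, b * pT U (x, τ) ^ 2 + a * pX (pX U) (x, τ) ^ 2)
    (fun τ => (key τ).differentiableAt) (fun τ => (key τ).deriv)
  rw [hI t, hI s]
  exact hconst t s
end

section
/- With u⁽¹⁾, u⁽²⁾ as in the two-block setting, assume the interface conditions at x = 0 for all t: u⁽¹⁾(0,t) = u⁽²⁾(0,t), ∂ₓu⁽¹⁾(0,t) = ∂ₓu⁽²⁾(0,t), a⁽¹⁾ ∂ₓ²u⁽¹⁾(0,t) = a⁽²⁾ ∂ₓ²u⁽²⁾(0,t), and a⁽¹⁾ ∂ₓ³u⁽¹⁾(0,t) = a⁽²⁾ ∂ₓ³u⁽²⁾(0,t); assume also the homogeneous clamped outer boundary conditions u⁽¹⁾(x_l,t) = ∂ₓu⁽¹⁾(x_l,t)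 = 0 and u⁽²⁾(x_r,t) = ∂ₓu⁽²⁾(x_r,t) = 0 for all t. Then the energy E(t) is constant in t. -/
open MeasureTheory intervalIntegral


noncomputable def DBE.pd (v : ℝ × ℝ) (f : ℝ × ℝ → ℝ) : ℝ × ℝ → ℝ :=
  fun p => fderiv ℝ f p v

namespace DBE

noncomputable abbrev pdx := pd ((1 : ℝ), (0 : ℝ))
noncomputable abbrev pdt := pd ((0 : ℝ), (1 : ℝ))

theorem pd_contDiff {f : ℝ × ℝ → ℝ} (hf : ContDiff ℝ (⊤ : ℕ∞) f) (v : ℝ × ℝ) :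
    ContDiff ℝ (⊤ : ℕ∞) (pd v f) :=
  (hf.fderiv_right (m := (⊤ : ℕ∞)) (by simp)).clm_apply contDiff_const

theorem pd_continuous {f : ℝ × ℝ → ℝ} (hf : ContDiff ℝ (⊤ : ℕ∞) f) (v : ℝ × ℝ) :
    Continuous (pd v f) := (pd_contDiff hf v).continuous

theorem hasDerivAt_slice_x {f : ℝ × ℝ → ℝ} (hf : ContDiff ℝ (⊤ : ℕ∞) f) (x t : ℝ) :
    HasDerivAt (fun y => f (y, t)) (pdx f (x, t)) x := by
  have h1 : HasFDerivAt f (fderiv ℝ f (x, t)) (x, t) :=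
    (hf.differentiable (by simp) (x, t)).hasFDerivAt
  have h2 : HasDerivAt (fun y : ℝ => ((y, t) : ℝ × ℝ)) ((1 : ℝ), (0 : ℝ)) x := by
    simpa using (hasDerivAt_id x).prodMk (hasDerivAt_const x t)
  exact h1.comp_hasDerivAt x h2

theorem hasDerivAt_slice_t {f : ℝ × ℝ → ℝ} (hf : ContDiff ℝ (⊤ : ℕ∞) f) (x t : ℝ) :
    HasDerivAt (fun s => f (x, s)) (pdt f (x, t)) t := by
  have h1 : HasFDerivAt f (fderiv ℝ f (x, t)) (x, t) :=
    (hf.differentiable (by simp) (x, t)).hasFDerivAt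
  have h2 : HasDerivAt (fun s : ℝ => ((x, s) : ℝ × ℝ)) ((0 : ℝ), (1 : ℝ)) t := by
    simpa using (hasDerivAt_const t x).prodMk (hasDerivAt_id t)
  exact h1.comp_hasDerivAt t h2

theorem deriv_slice_x {f : ℝ × ℝ → ℝ} (hf : ContDiff ℝ (⊤ : ℕ∞) f) (x t : ℝ) :
    deriv (fun y => f (y, t)) x = pdx f (x, t) :=
  (hasDerivAt_slice_x hf x t).deriv

theorem deriv_slice_t {f : ℝ × ℝ → ℝ} (hf : ContDiff ℝ (⊤ : ℕ∞) f) (x t : ℝ) :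
    deriv (fun s => f (x, s)) t = pdt f (x, t) :=
  (hasDerivAt_slice_t hf x t).deriv

theorem pd_comm {f : ℝ × ℝ → ℝ} (hf : ContDiff ℝ (⊤ : ℕ∞) f) (v w : ℝ × ℝ) :
    pd v (pd w f) = pd w (pd v f) := by
  funext p
  have hdf : Differentiable ℝ (fderiv ℝ f) :=
    (hf.fderiv_right (m := (⊤ : ℕ∞)) (by simp)).differentiable (by simp)
  have hsymm := second_derivative_symmetric (f := f) (f' := fderiv ℝ f)
    (f'' := fderiv ℝ (fderiv ℝ f) p)
    (fun y => (hf.differentiable (by simp) y).hasFDerivAt) (hdf p).hasFDerivAt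
  have key : ∀ a b : ℝ × ℝ,
      fderiv ℝ (fun q => fderiv ℝ f q b) p a = fderiv ℝ (fderiv ℝ f) p a b := by
    intro a b
    rw [fderiv_clm_apply (hdf p) (differentiableAt_const b)]
    simp
  show fderiv ℝ (fun q => fderiv ℝ f q w) p v = fderiv ℝ (fun q => fderiv ℝ f q v) p w
  rw [key, key, hsymm]

end DBE

namespace DBE

theorem iterate4 (f : ℝ × ℝ → ℝ) : pdx^[4] f = pdx (pdx (pdx (pdx f))) := rfl
theorem iterate3 (f : ℝ × ℝ → ℝ) : pdx^[3] f = pdx (pdx (pdx f)) := rfl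
theorem iterate2 (f : ℝ × ℝ → ℝ) : pdx^[2] f = pdx (pdx f) := rfl

theorem iteratedDeriv_slice {f : ℝ × ℝ → ℝ} (hf : ContDiff ℝ (⊤ : ℕ∞) f) (n : ℕ) (x t : ℝ) :
    iteratedDeriv n (fun y => f (y, t)) x = (pdx^[n] f) (x, t) := by
  induction n generalizing f with
  | zero => simp
  | succ n ih =>
    rw [iteratedDeriv_succ']
    have h : deriv (fun y => f (y, t)) = fun y => pdx f (y, t) :=
      funext fun y => deriv_slice_x hf y t
    rw [h, ih (pd_contDiff hf _), Function.iterate_succ_apply]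

theorem slice_cont_x {f : ℝ × ℝ → ℝ} (hf : ContDiff ℝ (⊤ : ℕ∞) f) (t : ℝ) :
    Continuous (fun x => f (x, t)) :=
  hf.continuous.comp (continuous_id.prodMk continuous_const)

theorem slice_cont_t {f : ℝ × ℝ → ℝ} (hf : ContDiff ℝ (⊤ : ℕ∞) f) (x : ℝ) :
    Continuous (fun s => f (x, s)) :=
  hf.continuous.comp (continuous_const.prodMk continuous_id)

theorem hasDerivAt_energy_density {f : ℝ × ℝ → ℝ} (hf : ContDiff ℝ (⊤ : ℕ∞) f)
    (bb aa x τ : ℝ) :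
    HasDerivAt (fun s => bb * (pdt f (x, s)) ^ 2 + aa * (pdx (pdx f) (x, s)) ^ 2)
      (2 * bb * pdt f (x, τ) * pdt (pdt f) (x, τ)
        + 2 * aa * pdx (pdx f) (x, τ) * pdt (pdx (pdx f)) (x, τ)) τ := by
  have h1 := hasDerivAt_slice_t (pd_contDiff hf ((0:ℝ),(1:ℝ))) x τ
  have h2 := hasDerivAt_slice_t (pd_contDiff (pd_contDiff hf ((1:ℝ),(0:ℝ))) ((1:ℝ),(0:ℝ))) x τ
  have h := ((h1.pow 2).const_mul bb).add ((h2.pow 2).const_mul aa)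
  refine h.congr_deriv ?_
  rw [show (2:ℕ) - 1 = 1 from rfl]
  push_cast
  ring

/-- Integration by parts for one block (with explicit antiderivative + FTC). -/
theorem block_integral {f : ℝ × ℝ → ℝ} (hf : ContDiff ℝ (⊤ : ℕ∞) f)
    (aa bb l r τ : ℝ) (hlr : l ≤ r)
    (hpde : ∀ x ∈ Set.Icc l r,
      bb * pdt (pdt f) (x, τ) = -aa * pdx (pdx (pdx (pdx f))) (x, τ)) :
    (∫ x in l..r, 2 * bb * pdt f (x, τ) * pdt (pdt f) (x, τ)
        + 2 * aa * pdx (pdx f) (x, τ) * pdt (pdx (pdx f)) (x, τ))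
    = 2 * aa * ((pdx (pdx f) (r, τ) * pdx (pdt f) (r, τ)
          - pdx (pdx (pdx f)) (r, τ) * pdt f (r, τ))
        - (pdx (pdx f) (l, τ) * pdx (pdt f) (l, τ)
          - pdx (pdx (pdx f)) (l, τ) * pdt f (l, τ))) := by
  have hcomm0 : pdt (pdx f) = pdx (pdt f) := pd_comm hf _ _
  have hcomm1 : pdt (pdx (pdx f)) = pdx (pdx (pdt f)) :=
    (pd_comm (pd_contDiff hf ((1:ℝ),(0:ℝ))) ((0:ℝ),(1:ℝ)) ((1:ℝ),(0:ℝ))).trans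
      (congrArg (pd ((1:ℝ),(0:ℝ))) hcomm0)
  set F : ℝ → ℝ := fun x => pdx (pdx f) (x, τ) * pdx (pdt f) (x, τ)
      - pdx (pdx (pdx f)) (x, τ) * pdt f (x, τ) with hFdef
  set D : ℝ → ℝ := fun x =>
      pdx (pdx f) (x, τ) * pdx (pdx (pdt f)) (x, τ)
      - pdx (pdx (pdx (pdx f))) (x, τ) * pdt f (x, τ) with hDdef
  have hFderiv : ∀ x, HasDerivAt F (D x) x := by
    intro x
    have h2 := hasDerivAt_slice_x (pd_contDiff (pd_contDiff hf ((1:ℝ),(0:ℝ))) ((1:ℝ),(0:ℝ))) x τ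
    have h3 := hasDerivAt_slice_x
      (pd_contDiff (pd_contDiff (pd_contDiff hf ((1:ℝ),(0:ℝ))) ((1:ℝ),(0:ℝ))) ((1:ℝ),(0:ℝ))) x τ
    have ha := hasDerivAt_slice_x (pd_contDiff hf ((0:ℝ),(1:ℝ))) x τ
    have hb := hasDerivAt_slice_x (pd_contDiff (pd_contDiff hf ((0:ℝ),(1:ℝ))) ((1:ℝ),(0:ℝ))) x τ
    have h := (h2.mul hb).sub (h3.mul ha)
    refine h.congr_deriv ?_
    simp only [hDdef]
    ring
  have contf : ∀ (g : ℝ × ℝ → ℝ), ContDiff ℝ (⊤ : ℕ∞) g → Continuous fun x => g (x, τ) :=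
    fun g hg => slice_cont_x hg τ
  have hDcont : Continuous D := by
    apply Continuous.sub
    · exact (contf _ (pd_contDiff (pd_contDiff hf ((1:ℝ),(0:ℝ))) ((1:ℝ),(0:ℝ)))).mul
        (contf _ (pd_contDiff (pd_contDiff (pd_contDiff hf ((0:ℝ),(1:ℝ))) ((1:ℝ),(0:ℝ))) ((1:ℝ),(0:ℝ))))
    · exact (contf _ (pd_contDiff (pd_contDiff (pd_contDiff (pd_contDiff hf ((1:ℝ),(0:ℝ))) ((1:ℝ),(0:ℝ))) ((1:ℝ),(0:ℝ))) ((1:ℝ),(0:ℝ)))).mul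
        (contf _ (pd_contDiff hf ((0:ℝ),(1:ℝ))))
  have hFTC : (∫ x in l..r, 2 * aa * D x) = 2 * aa * (F r - F l) := by
    rw [intervalIntegral.integral_const_mul,
      intervalIntegral.integral_eq_sub_of_hasDerivAt (fun x _ => hFderiv x)
        (hDcont.intervalIntegrable l r)]
  rw [← hFTC]
  apply intervalIntegral.integral_congr
  intro x hx
  rw [Set.uIcc_of_le hlr] at hx
  have hp := hpde x hx
  simp only [hcomm1, hDdef]
  linear_combination (2 : ℝ) * pdt f (x, τ) * hp

theorem pdxt_comm {f : ℝ × ℝ → ℝ} (hf : ContDiff ℝ (⊤ : ℕ∞) f) :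
    pdx (pdt f) = pdt (pdx f) :=
  pd_comm hf ((1:ℝ),(0:ℝ)) ((0:ℝ),(1:ℝ))

theorem swap_integrals {G : ℝ → ℝ → ℝ} (hG : Continuous (Function.uncurry G))
    {a b c d : ℝ} (hab : a ≤ b) (hcd : c ≤ d) :
    (∫ x in a..b, ∫ y in c..d, G x y) = ∫ y in c..d, ∫ x in a..b, G x y := by
  simp_rw [intervalIntegral.integral_of_le hab, intervalIntegral.integral_of_le hcd]
  apply MeasureTheory.integral_integral_swap
  rw [Measure.prod_restrict]
  exact (hG.continuousOn.integrableOn_compact (isCompact_Icc.prod isCompact_Icc)).mono_set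
    (Set.prod_mono Set.Ioc_subset_Icc_self Set.Ioc_subset_Icc_self)

end DBE


open DBE in
/-- Energy conservation for the two-block dynamic beam equation with the four
interface conditions at `x = 0` and homogeneous clamped outer boundary conditions. -/
theorem dbe_two_block_energy_conservation
    (a1 a2 b1 b2 xl xr : ℝ)
    (ha1 : 0 < a1) (ha2 : 0 < a2) (hb1 : 0 < b1) (hb2 : 0 < b2)
    (hxl : xl < 0) (hxr : 0 < xr)
    (u1 u2 : ℝ → ℝ → ℝ)
    (hu1 : ContDiff ℝ (⊤ : ℕ∞) (Function.uncurry u1))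
    (hu2 : ContDiff ℝ (⊤ : ℕ∞) (Function.uncurry u2))
    (hpde1 : ∀ x ∈ Set.Icc xl 0, ∀ t : ℝ,
      b1 * deriv (deriv (u1 x)) t = -a1 * iteratedDeriv 4 (fun y => u1 y t) x)
    (hpde2 : ∀ x ∈ Set.Icc 0 xr, ∀ t : ℝ,
      b2 * deriv (deriv (u2 x)) t = -a2 * iteratedDeriv 4 (fun y => u2 y t) x)
    -- interface conditions at x = 0
    (hic0 : ∀ t : ℝ, u1 0 t = u2 0 t)
    (hic1 : ∀ t : ℝ, deriv (fun y => u1 y t) 0 = deriv (fun y => u2 y t) 0)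
    (hic2 : ∀ t : ℝ, a1 * iteratedDeriv 2 (fun y => u1 y t) 0
      = a2 * iteratedDeriv 2 (fun y => u2 y t) 0)
    (hic3 : ∀ t : ℝ, a1 * iteratedDeriv 3 (fun y => u1 y t) 0
      = a2 * iteratedDeriv 3 (fun y => u2 y t) 0)
    -- homogeneous clamped outer boundary conditions
    (hbc1 : ∀ t : ℝ, u1 xl t = 0)
    (hbc1x : ∀ t : ℝ, deriv (fun y => u1 y t) xl = 0)
    (hbc2 : ∀ t : ℝ, u2 xr t = 0)
    (hbc2x : ∀ t : ℝ, deriv (fun y => u2 y t) xr = 0)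
    (E : ℝ → ℝ)
    (hE : ∀ t : ℝ, E t =
      (∫ x in xl..(0:ℝ),
        b1 * (deriv (u1 x) t) ^ 2 + a1 * (iteratedDeriv 2 (fun y => u1 y t) x) ^ 2)
      + ∫ x in (0:ℝ)..xr,
        b2 * (deriv (u2 x) t) ^ 2 + a2 * (iteratedDeriv 2 (fun y => u2 y t) x) ^ 2) :
    ∀ t s : ℝ, E t = E s := by
  have key : ∀ p q : ℝ, p ≤ q → E q = E p := by
    intro p q hpq
    set U1 : ℝ × ℝ → ℝ := Function.uncurry u1 with hU1def
    set U2 : ℝ × ℝ → ℝ := Function.uncurry u2 with hU2def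
    -- translation of slice derivatives
    have e1t : ∀ x t, deriv (u1 x) t = pdt U1 (x, t) := fun x t => deriv_slice_t hu1 x t
    have e2t : ∀ x t, deriv (u2 x) t = pdt U2 (x, t) := fun x t => deriv_slice_t hu2 x t
    have e1nn : ∀ (n : ℕ) (x t : ℝ),
        iteratedDeriv n (fun y => u1 y t) x = (pdx^[n] U1) (x, t) :=
      fun n x t => iteratedDeriv_slice hu1 n x t
    have e2nn : ∀ (n : ℕ) (x t : ℝ),
        iteratedDeriv n (fun y => u2 y t) x = (pdx^[n] U2) (x, t) :=
      fun n x t => iteratedDeriv_slice hu2 n x t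
    have e1tt : ∀ x t, deriv (deriv (u1 x)) t = pdt (pdt U1) (x, t) := by
      intro x t
      have h : deriv (u1 x) = fun s => pdt U1 (x, s) := funext fun s => e1t x s
      rw [h]
      exact deriv_slice_t (pd_contDiff hu1 ((0:ℝ),(1:ℝ))) x t
    have e2tt : ∀ x t, deriv (deriv (u2 x)) t = pdt (pdt U2) (x, t) := by
      intro x t
      have h : deriv (u2 x) = fun s => pdt U2 (x, s) := funext fun s => e2t x s
      rw [h]
      exact deriv_slice_t (pd_contDiff hu2 ((0:ℝ),(1:ℝ))) x t
    -- PDEs in partial-derivative form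
    have hpde1' : ∀ x ∈ Set.Icc xl 0, ∀ t : ℝ,
        b1 * pdt (pdt U1) (x, t) = -a1 * pdx (pdx (pdx (pdx U1))) (x, t) := by
      intro x hx t
      have h := hpde1 x hx t
      rw [e1tt, e1nn 4 x t] at h
      exact h
    have hpde2' : ∀ x ∈ Set.Icc 0 xr, ∀ t : ℝ,
        b2 * pdt (pdt U2) (x, t) = -a2 * pdx (pdx (pdx (pdx U2))) (x, t) := by
      intro x hx t
      have h := hpde2 x hx t
      rw [e2tt, e2nn 4 x t] at h
      exact h
    -- boundary conditions in partial-derivative form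
    have hW_l : ∀ τ : ℝ, pdt U1 (xl, τ) = 0 := by
      intro τ
      rw [← deriv_slice_t hu1 xl τ]
      have h : (fun s => U1 (xl, s)) = fun _ => (0 : ℝ) := funext fun s => hbc1 s
      rw [h, deriv_const]
    have hW_r : ∀ τ : ℝ, pdt U2 (xr, τ) = 0 := by
      intro τ
      rw [← deriv_slice_t hu2 xr τ]
      have h : (fun s => U2 (xr, s)) = fun _ => (0 : ℝ) := funext fun s => hbc2 s
      rw [h, deriv_const]
    have hWx_l : ∀ τ : ℝ, pdx (pdt U1) (xl, τ) = 0 := by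
      intro τ
      rw [pdxt_comm hu1]
      rw [← deriv_slice_t (pd_contDiff hu1 ((1:ℝ),(0:ℝ))) xl τ]
      have h : (fun s => pdx U1 (xl, s)) = fun _ => (0 : ℝ) := by
        funext s
        rw [← deriv_slice_x hu1 xl s]
        exact hbc1x s
      rw [h, deriv_const]
    have hWx_r : ∀ τ : ℝ, pdx (pdt U2) (xr, τ) = 0 := by
      intro τ
      rw [pdxt_comm hu2]
      rw [← deriv_slice_t (pd_contDiff hu2 ((1:ℝ),(0:ℝ))) xr τ]
      have h : (fun s => pdx U2 (xr, s)) = fun _ => (0 : ℝ) := by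
        funext s
        rw [← deriv_slice_x hu2 xr s]
        exact hbc2x s
      rw [h, deriv_const]
    -- interface conditions in partial-derivative form
    have hicW : ∀ τ : ℝ, pdt U1 (0, τ) = pdt U2 (0, τ) := by
      intro τ
      rw [← deriv_slice_t hu1 0 τ, ← deriv_slice_t hu2 0 τ]
      have h : (fun s => U1 ((0:ℝ), s)) = fun s => U2 ((0:ℝ), s) := funext fun s => hic0 s
      rw [h]
    have hicWx : ∀ τ : ℝ, pdx (pdt U1) (0, τ) = pdx (pdt U2) (0, τ) := by
      intro τ
      rw [pdxt_comm hu1, pdxt_comm hu2]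
      rw [← deriv_slice_t (pd_contDiff hu1 ((1:ℝ),(0:ℝ))) 0 τ,
        ← deriv_slice_t (pd_contDiff hu2 ((1:ℝ),(0:ℝ))) 0 τ]
      have h : (fun s => pdx U1 ((0:ℝ), s)) = fun s => pdx U2 ((0:ℝ), s) := by
        funext s
        rw [← deriv_slice_x hu1 0 s, ← deriv_slice_x hu2 0 s]
        exact hic1 s
      rw [h]
    have hic2' : ∀ τ : ℝ, a1 * pdx (pdx U1) (0, τ) = a2 * pdx (pdx U2) (0, τ) := by
      intro τ
      have h := hic2 τ
      rw [e1nn 2 0 τ, e2nn 2 0 τ] at h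
      exact h
    have hic3' : ∀ τ : ℝ, a1 * pdx (pdx (pdx U1)) (0, τ) = a2 * pdx (pdx (pdx U2)) (0, τ) := by
      intro τ
      have h := hic3 τ
      rw [e1nn 3 0 τ, e2nn 3 0 τ] at h
      exact h
    -- the boundary flux
    set c1 : ℝ → ℝ := fun τ => 2 * a1 * (pdx (pdx U1) (0, τ) * pdx (pdt U1) (0, τ)
        - pdx (pdx (pdx U1)) (0, τ) * pdt U1 (0, τ)) with hc1def
    have hc12 : ∀ τ : ℝ, c1 τ = 2 * a2 * (pdx (pdx U2) (0, τ) * pdx (pdt U2) (0, τ)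
        - pdx (pdx (pdx U2)) (0, τ) * pdt U2 (0, τ)) := by
      intro τ
      simp only [hc1def]
      rw [hicW τ, hicWx τ]
      linear_combination 2 * pdx (pdt U2) (0, τ) * hic2' τ - 2 * pdt U2 (0, τ) * hic3' τ
    -- the time-derivative integrands
    set G1 : ℝ → ℝ → ℝ := fun x τ => 2 * b1 * pdt U1 (x, τ) * pdt (pdt U1) (x, τ)
        + 2 * a1 * pdx (pdx U1) (x, τ) * pdt (pdx (pdx U1)) (x, τ) with hG1def
    set G2 : ℝ → ℝ → ℝ := fun x τ => 2 * b2 * pdt U2 (x, τ) * pdt (pdt U2) (x, τ)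
        + 2 * a2 * pdx (pdx U2) (x, τ) * pdt (pdx (pdx U2)) (x, τ) with hG2def
    have hblock1 : ∀ τ : ℝ, (∫ x in xl..(0:ℝ), G1 x τ) = c1 τ := by
      intro τ
      have h := block_integral hu1 a1 b1 xl 0 τ hxl.le (fun x hx => hpde1' x hx τ)
      simp only [hG1def, hc1def]
      rw [h, hW_l τ, hWx_l τ]
      ring
    have hblock2 : ∀ τ : ℝ, (∫ x in (0:ℝ)..xr, G2 x τ) = -(c1 τ) := by
      intro τ
      have h := block_integral hu2 a2 b2 0 xr τ hxr.le (fun x hx => hpde2' x hx τ)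
      simp only [hG2def]
      rw [h, hW_r τ, hWx_r τ, hc12 τ]
      ring
    -- energy densities
    set g1 : ℝ → ℝ → ℝ := fun x s => b1 * (pdt U1 (x, s)) ^ 2
        + a1 * (pdx (pdx U1) (x, s)) ^ 2 with hg1def
    set g2 : ℝ → ℝ → ℝ := fun x s => b2 * (pdt U2 (x, s)) ^ 2
        + a2 * (pdx (pdx U2) (x, s)) ^ 2 with hg2def
    have hE' : ∀ s : ℝ, E s = (∫ x in xl..(0:ℝ), g1 x s) + ∫ x in (0:ℝ)..xr, g2 x s := by
      intro s
      rw [hE s]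
      congr 1
      · apply intervalIntegral.integral_congr
        intro x _
        show b1 * (deriv (u1 x) s) ^ 2
            + a1 * (iteratedDeriv 2 (fun y => u1 y s) x) ^ 2 = g1 x s
        rw [e1t x s, e1nn 2 x s]
        rfl
      · apply intervalIntegral.integral_congr
        intro x _
        show b2 * (deriv (u2 x) s) ^ 2
            + a2 * (iteratedDeriv 2 (fun y => u2 y s) x) ^ 2 = g2 x s
        rw [e2t x s, e2nn 2 x s]
        rfl
    -- continuity facts
    have contg1 : ∀ s, Continuous (fun x => g1 x s) := by
      intro s
      apply Continuous.add
      · exact continuous_const.mul ((slice_cont_x (pd_contDiff hu1 ((0:ℝ),(1:ℝ))) s).pow 2)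
      · exact continuous_const.mul ((slice_cont_x (pd_contDiff (pd_contDiff hu1 ((1:ℝ),(0:ℝ))) ((1:ℝ),(0:ℝ))) s).pow 2)
    have contg2 : ∀ s, Continuous (fun x => g2 x s) := by
      intro s
      apply Continuous.add
      · exact continuous_const.mul ((slice_cont_x (pd_contDiff hu2 ((0:ℝ),(1:ℝ))) s).pow 2)
      · exact continuous_const.mul ((slice_cont_x (pd_contDiff (pd_contDiff hu2 ((1:ℝ),(0:ℝ))) ((1:ℝ),(0:ℝ))) s).pow 2)
    have hG1cont : Continuous (Function.uncurry G1) := by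
      have h : Function.uncurry G1 = fun pr : ℝ × ℝ => 2 * b1 * pdt U1 pr * pdt (pdt U1) pr
          + 2 * a1 * pdx (pdx U1) pr * pdt (pdx (pdx U1)) pr := rfl
      rw [h]
      apply Continuous.add
      · exact ((continuous_const.mul (pd_continuous hu1 _)).mul
          (pd_continuous (pd_contDiff hu1 ((0:ℝ),(1:ℝ))) _))
      · exact ((continuous_const.mul (pd_continuous (pd_contDiff hu1 ((1:ℝ),(0:ℝ))) _)).mul
          (pd_continuous (pd_contDiff (pd_contDiff hu1 ((1:ℝ),(0:ℝ))) ((1:ℝ),(0:ℝ))) _))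
    have hG2cont : Continuous (Function.uncurry G2) := by
      have h : Function.uncurry G2 = fun pr : ℝ × ℝ => 2 * b2 * pdt U2 pr * pdt (pdt U2) pr
          + 2 * a2 * pdx (pdx U2) pr * pdt (pdx (pdx U2)) pr := rfl
      rw [h]
      apply Continuous.add
      · exact ((continuous_const.mul (pd_continuous hu2 _)).mul
          (pd_continuous (pd_contDiff hu2 ((0:ℝ),(1:ℝ))) _))
      · exact ((continuous_const.mul (pd_continuous (pd_contDiff hu2 ((1:ℝ),(0:ℝ))) _)).mul
          (pd_continuous (pd_contDiff (pd_contDiff hu2 ((1:ℝ),(0:ℝ))) ((1:ℝ),(0:ℝ))) _))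
    have contG1x : ∀ x, Continuous (fun τ => G1 x τ) :=
      fun x => hG1cont.comp (continuous_const.prodMk continuous_id)
    have contG2x : ∀ x, Continuous (fun τ => G2 x τ) :=
      fun x => hG2cont.comp (continuous_const.prodMk continuous_id)
    -- FTC in time for the densities
    have hftc1 : ∀ x : ℝ, g1 x q - g1 x p = ∫ τ in p..q, G1 x τ := by
      intro x
      exact (intervalIntegral.integral_eq_sub_of_hasDerivAt
        (fun τ _ => hasDerivAt_energy_density hu1 b1 a1 x τ)
        ((contG1x x).intervalIntegrable p q)).symm
    have hftc2 : ∀ x : ℝ, g2 x q - g2 x p = ∫ τ in p..q, G2 x τ := by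
      intro x
      exact (intervalIntegral.integral_eq_sub_of_hasDerivAt
        (fun τ _ => hasDerivAt_energy_density hu2 b2 a2 x τ)
        ((contG2x x).intervalIntegrable p q)).symm
    -- putting it together
    have h11 : (∫ x in xl..(0:ℝ), g1 x q) - (∫ x in xl..(0:ℝ), g1 x p)
        = ∫ τ in p..q, c1 τ := by
      rw [← intervalIntegral.integral_sub ((contg1 q).intervalIntegrable xl 0)
        ((contg1 p).intervalIntegrable xl 0)]
      rw [intervalIntegral.integral_congr (g := fun x => ∫ τ in p..q, G1 x τ)
        (fun x _ => hftc1 x)]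
      rw [swap_integrals hG1cont hxl.le hpq]
      exact intervalIntegral.integral_congr (fun τ _ => hblock1 τ)
    have h22 : (∫ x in (0:ℝ)..xr, g2 x q) - (∫ x in (0:ℝ)..xr, g2 x p)
        = ∫ τ in p..q, -(c1 τ) := by
      rw [← intervalIntegral.integral_sub ((contg2 q).intervalIntegrable 0 xr)
        ((contg2 p).intervalIntegrable 0 xr)]
      rw [intervalIntegral.integral_congr (g := fun x => ∫ τ in p..q, G2 x τ)
        (fun x _ => hftc2 x)]
      rw [swap_integrals hG2cont hxr.le hpq]
      exact intervalIntegral.integral_congr (fun τ _ => hblock2 τ)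
    have hneg : (∫ τ in p..q, -(c1 τ)) = -∫ τ in p..q, c1 τ :=
      intervalIntegral.integral_neg
    have hEq := hE' q
    have hEp := hE' p
    linarith [h11, h22, hneg, hEq, hEp]
  intro t s
  rcases le_total s t with h | h
  · exact key s t h
  · exact (key t s h).symm
end

section
/- Assume the SBP setup and the decomposition of N, let a, b > 0, and set τ = 1/α_III and σ = 1/α_II. Let v : ℝ → ℝ^m be twice continuously differentiable and satisfy, for all t, b v″(t) = −a D₄ v(t) − a H⁻¹ (d_{3;l} + τ h⁻³ e_l) (e_lᵀ v(t)) − a H⁻¹ (d_{2;l} + σ h⁻¹ d_{1;l}) (d_{1;l}ᵀ v(t)) − a H⁻¹ (d_{3;r} + τ h⁻³ e_r) (e_rᵀ v(t)) + a H⁻¹ (d_{2;r} − σ h⁻¹ d_{1;r}) (d_{1;r}ᵀ v(t)). Then the energy E(t) = b ‖v′(t)‖²_H + a v(t)ᵀ Ñ v(t) + a [ τ h⁻³ (e_lᵀ v)² + 2 (e_lᵀ v)(d_{3;l}ᵀ v) + h³ α_III (d_{3;l}ᵀ v)² + σ h⁻¹ (d_{1;l}ᵀ v)² + 2 (d_{1;l}ᵀ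 v)(d_{2;l}ᵀ v) + h α_II (d_{2;l}ᵀ v)² + τ h⁻³ (e_rᵀ v)² + 2 (e_rᵀ v)(d_{3;r}ᵀ v) + h³ α_III (d_{3;r}ᵀ v)² + σ h⁻¹ (d_{1;r}ᵀ v)² − 2 (d_{1;r}ᵀ v)(d_{2;r}ᵀ v) + h α_II (d_{2;r}ᵀ v)² ] is non-negative and constant in t. (This is the energy stability of the SBP-SAT discretization of the dynamic beam equation with clamped boundary conditions.) -/
open Matrix

private lemma vmv_mulVec {m : ℕ} (x y u : Fin m → ℝ) :
    vecMulVec x y *ᵥ u = (y ⬝ᵥ u) • x := by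
  ext i
  simp [Matrix.mulVec, Matrix.vecMulVec_apply, dotProduct, Finset.mul_sum, Finset.sum_mul,
    mul_comm, mul_left_comm, mul_assoc]

private lemma hasDerivAt_dot {m : ℕ} (c : Fin m → ℝ) {f : ℝ → Fin m → ℝ} {f' : Fin m → ℝ} {t : ℝ}
    (hf : HasDerivAt f f' t) : HasDerivAt (fun s => c ⬝ᵥ f s) (c ⬝ᵥ f') t := by
  simp only [dotProduct]
  exact HasDerivAt.fun_sum fun i _ => ((hasDerivAt_pi.mp hf i).const_mul (c i))

private lemma hasDerivAt_dot2 {m : ℕ} {f g : ℝ → Fin m → ℝ} {f' g' : Fin m → ℝ} {t : ℝ}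
    (hf : HasDerivAt f f' t) (hg : HasDerivAt g g' t) :
    HasDerivAt (fun s => f s ⬝ᵥ g s) (f' ⬝ᵥ g t + f t ⬝ᵥ g') t := by
  have h1 : HasDerivAt (fun s => ∑ i, f s i * g s i) (∑ i, (f' i * g t i + f t i * g' i)) t :=
    HasDerivAt.fun_sum fun i _ => (hasDerivAt_pi.mp hf i).mul (hasDerivAt_pi.mp hg i)
  simpa [dotProduct, Finset.sum_add_distrib] using h1

private lemma hasDerivAt_mulVec {m : ℕ} (M : Matrix (Fin m) (Fin m) ℝ) {f : ℝ → Fin m → ℝ}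
    {f' : Fin m → ℝ} {t : ℝ} (hf : HasDerivAt f f' t) :
    HasDerivAt (fun s => M *ᵥ f s) (M *ᵥ f') t :=
  hasDerivAt_pi.mpr fun i => hasDerivAt_dot (M i) hf

private lemma dot_symm {m : ℕ} {M : Matrix (Fin m) (Fin m) ℝ} (hM : Mᵀ = M) (x y : Fin m → ℝ) :
    x ⬝ᵥ (M *ᵥ y) = y ⬝ᵥ (M *ᵥ x) := by
  rw [Matrix.dotProduct_mulVec]
  nth_rewrite 1 [← hM]
  rw [Matrix.vecMul_transpose, dotProduct_comm]

private lemma quad_nonneg_p (c x y : ℝ) (hc : 0 < c) : 0 ≤ 1 / c * x ^ 2 + 2 * x * y + c * y ^ 2 := by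
  have he : 1 / c * x ^ 2 + 2 * x * y + c * y ^ 2 = (x + c * y) ^ 2 / c := by
    field_simp; ring
  rw [he]; positivity

private lemma quad_nonneg_m (c x y : ℝ) (hc : 0 < c) : 0 ≤ 1 / c * x ^ 2 - 2 * x * y + c * y ^ 2 := by
  nlinarith [quad_nonneg_p c x (-y) hc]

/-- Energy stability of the SBP-SAT discretization of the dynamic beam equation
with clamped boundary conditions, with penalty parameters `τ = 1/α_III`,
`σ = 1/α_II`. -/
theorem sbp_sat_clamped_energy_stable
    (m : ℕ) (hm : 1 ≤ m)
    (H N : Matrix (Fin m) (Fin m) ℝ)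
    (hHdiag : H.IsDiag) (hH : H.PosDef) (hN : N.PosSemidef)
    (el er d1l d1r d2l d2r d3l d3r : Fin m → ℝ)
    (D4 : Matrix (Fin m) (Fin m) ℝ)
    (hD4 : D4 = H⁻¹ * (N + vecMulVec el d3l + vecMulVec d1l d2l
      + vecMulVec er d3r - vecMulVec d1r d2r))
    (Ntil : Matrix (Fin m) (Fin m) ℝ) (hNtil : Ntil.PosSemidef)
    (h αII αIII : ℝ) (hh : 0 < h) (hαII : 0 < αII) (hαIII : 0 < αIII)
    (hsplit : N = Ntil + (h * αII) • (vecMulVec d2l d2l + vecMulVec d2r d2r)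
      + (h ^ 3 * αIII) • (vecMulVec d3l d3l + vecMulVec d3r d3r))
    (a b τ σ : ℝ) (ha : 0 < a) (hb : 0 < b)
    (hτ : τ = 1 / αIII) (hσ : σ = 1 / αII)
    (v : ℝ → Fin m → ℝ) (hv : ContDiff ℝ 2 v)
    (hode : ∀ t : ℝ,
      b • deriv (deriv v) t =
        -(a • (D4 *ᵥ v t))
        - (a * (el ⬝ᵥ v t)) • (H⁻¹ *ᵥ (d3l + (τ / h ^ 3) • el))
        - (a * (d1l ⬝ᵥ v t)) • (H⁻¹ *ᵥ (d2l + (σ / h) • d1l))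
        - (a * (er ⬝ᵥ v t)) • (H⁻¹ *ᵥ (d3r + (τ / h ^ 3) • er))
        + (a * (d1r ⬝ᵥ v t)) • (H⁻¹ *ᵥ (d2r - (σ / h) • d1r)))
    (E : ℝ → ℝ)
    (hE : ∀ t : ℝ, E t =
      b * (deriv v t ⬝ᵥ (H *ᵥ deriv v t))
      + a * (v t ⬝ᵥ (Ntil *ᵥ v t))
      + a * (τ / h ^ 3 * (el ⬝ᵥ v t) ^ 2
          + 2 * (el ⬝ᵥ v t) * (d3l ⬝ᵥ v t)
          + h ^ 3 * αIII * (d3l ⬝ᵥ v t) ^ 2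
          + σ / h * (d1l ⬝ᵥ v t) ^ 2
          + 2 * (d1l ⬝ᵥ v t) * (d2l ⬝ᵥ v t)
          + h * αII * (d2l ⬝ᵥ v t) ^ 2
          + τ / h ^ 3 * (er ⬝ᵥ v t) ^ 2
          + 2 * (er ⬝ᵥ v t) * (d3r ⬝ᵥ v t)
          + h ^ 3 * αIII * (d3r ⬝ᵥ v t) ^ 2
          + σ / h * (d1r ⬝ᵥ v t) ^ 2
          - 2 * (d1r ⬝ᵥ v t) * (d2r ⬝ᵥ v t)
          + h * αII * (d2r ⬝ᵥ v t) ^ 2)) :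
    (∀ t : ℝ, 0 ≤ E t) ∧ (∀ t s : ℝ, E t = E s) := by
  have hdet : IsUnit H.det := isUnit_iff_ne_zero.mpr (ne_of_gt hH.det_pos)
  have hHinv : H * H⁻¹ = 1 := Matrix.mul_nonsing_inv _ hdet
  have hHs : Hᵀ = H := hHdiag.isSymm
  have hNs : Ntilᵀ = Ntil := hNtil.1
  have h2 : ContDiff ℝ ((1 : WithTop ℕ∞) + 1) v := by exact_mod_cast hv
  obtain ⟨hv1, -, hw1⟩ := contDiff_succ_iff_deriv.mp h2
  have hwdiff : Differentiable ℝ (deriv v) := hw1.differentiable one_ne_zero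
  constructor
  · -- nonnegativity
    intro t
    rw [hE t]
    have hq1 : 0 ≤ deriv v t ⬝ᵥ (H *ᵥ deriv v t) := by
      simpa using hH.posSemidef.re_dotProduct_nonneg (deriv v t)
    have hq2 : 0 ≤ v t ⬝ᵥ (Ntil *ᵥ v t) := by
      simpa using hNtil.re_dotProduct_nonneg (v t)
    have hb3 : (0:ℝ) < h ^ 3 * αIII := by positivity
    have hb1 : (0:ℝ) < h * αII := by positivity
    have hτ3 : τ / h ^ 3 = 1 / (h ^ 3 * αIII) := by rw [hτ, div_div, mul_comm]
    have hσ1 : σ / h = 1 / (h * αII) := by rw [hσ, div_div, mul_comm]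
    have hbr : 0 ≤ τ / h ^ 3 * (el ⬝ᵥ v t) ^ 2
          + 2 * (el ⬝ᵥ v t) * (d3l ⬝ᵥ v t)
          + h ^ 3 * αIII * (d3l ⬝ᵥ v t) ^ 2
          + σ / h * (d1l ⬝ᵥ v t) ^ 2
          + 2 * (d1l ⬝ᵥ v t) * (d2l ⬝ᵥ v t)
          + h * αII * (d2l ⬝ᵥ v t) ^ 2
          + τ / h ^ 3 * (er ⬝ᵥ v t) ^ 2
          + 2 * (er ⬝ᵥ v t) * (d3r ⬝ᵥ v t)
          + h ^ 3 * αIII * (d3r ⬝ᵥ v t) ^ 2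
          + σ / h * (d1r ⬝ᵥ v t) ^ 2
          - 2 * (d1r ⬝ᵥ v t) * (d2r ⬝ᵥ v t)
          + h * αII * (d2r ⬝ᵥ v t) ^ 2 := by
      rw [hτ3, hσ1]
      have e1 := quad_nonneg_p _ (el ⬝ᵥ v t) (d3l ⬝ᵥ v t) hb3
      have e2 := quad_nonneg_p _ (d1l ⬝ᵥ v t) (d2l ⬝ᵥ v t) hb1
      have e3 := quad_nonneg_p _ (er ⬝ᵥ v t) (d3r ⬝ᵥ v t) hb3
      have e4 := quad_nonneg_m _ (d1r ⬝ᵥ v t) (d2r ⬝ᵥ v t) hb1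
      linarith
    have := mul_nonneg hb.le hq1
    have := mul_nonneg ha.le hq2
    have := mul_nonneg ha.le hbr
    linarith
  · -- constancy
    have hconst : ∀ t : ℝ, HasDerivAt E 0 t := by
      intro t
      rw [funext hE]
      have hvd : HasDerivAt v (deriv v t) t := (hv1 t).hasDerivAt
      have hwd : HasDerivAt (deriv v) (deriv (deriv v) t) t := (hwdiff t).hasDerivAt
      have hA : ∀ (c : Fin m → ℝ), HasDerivAt (fun s => c ⬝ᵥ v s) (c ⬝ᵥ deriv v t) t :=
        fun c => hasDerivAt_dot c hvd
      have t1 := hasDerivAt_dot2 hwd (hasDerivAt_mulVec H hwd)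
      have t2 := hasDerivAt_dot2 hvd (hasDerivAt_mulVec Ntil hvd)
      have HD := ((t1.const_mul b).add (t2.const_mul a)).add
        (((((((((((((((hA el).pow 2).const_mul (τ / h ^ 3)).add
          ((((hA el).const_mul 2).mul (hA d3l)))).add
          (((hA d3l).pow 2).const_mul (h ^ 3 * αIII))).add
          ((((hA d1l).pow 2).const_mul (σ / h)))).add
          ((((hA d1l).const_mul 2).mul (hA d2l)))).add
          (((hA d2l).pow 2).const_mul (h * αII))).add
          (((hA er).pow 2).const_mul (τ / h ^ 3))).add
          ((((hA er).const_mul 2).mul (hA d3r)))).add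
          (((hA d3r).pow 2).const_mul (h ^ 3 * αIII))).add
          ((((hA d1r).pow 2).const_mul (σ / h)))).sub
          ((((hA d1r).const_mul 2).mul (hA d2r)))).add
          (((hA d2r).pow 2).const_mul (h * αII))).const_mul a)
      convert HD using 1
      case e'_4 => rfl
      case e'_5 => rfl
      case e'_8 => rfl
      -- now prove 0 = derivative expression
      have hHD4 : H * D4 = N + vecMulVec el d3l + vecMulVec d1l d2l
          + vecMulVec er d3r - vecMulVec d1r d2r := by
        rw [hD4, ← Matrix.mul_assoc, hHinv, Matrix.one_mul]
      have hkey := congrArg (fun x => deriv v t ⬝ᵥ (H *ᵥ x)) (hode t)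
      simp only [Matrix.mulVec_smul, Matrix.mulVec_add, Matrix.mulVec_sub, Matrix.mulVec_neg,
        Matrix.mulVec_mulVec, hHinv, Matrix.one_mulVec, hHD4, hsplit,
        Matrix.add_mulVec, Matrix.sub_mulVec, Matrix.smul_mulVec, vmv_mulVec,
        dotProduct_add, dotProduct_sub, dotProduct_neg, dotProduct_smul,
        smul_eq_mul, smul_add, smul_sub] at hkey
      rw [dot_symm hHs (deriv (deriv v) t) (deriv v t), dot_symm hNs (v t) (deriv v t)]
      rw [dotProduct_comm (deriv v t) el, dotProduct_comm (deriv v t) er,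
        dotProduct_comm (deriv v t) d1l, dotProduct_comm (deriv v t) d1r,
        dotProduct_comm (deriv v t) d2l, dotProduct_comm (deriv v t) d2r,
        dotProduct_comm (deriv v t) d3l, dotProduct_comm (deriv v t) d3r] at hkey
      norm_num
      linear_combination -2 * hkey
    refine fun t s => is_const_of_deriv_eq_zero (fun t => (hconst t).differentiableAt)
      (fun t => (hconst t).deriv) t s
end

section
/- Assume the SBP setup. Let L_c be the 4×m matrix whose rows are e_lᵀ, d_{1;l}ᵀ, e_rᵀ, d_{1;r}ᵀ; assume L_c H⁻¹ L_cᵀ is invertible and let P be the associated projection. Then H P D₄ P = Pᵀ N P; in particular H P D₄ P is symmetric positive semidefinite, and for every a > 0 every complex eigenvalue of the matrix −a P D₄ P is a real number that is ≤ 0. -/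
open Matrix

open scoped ComplexOrder

noncomputable section

lemma psd_map_complex {m : ℕ} {S : Matrix (Fin m) (Fin m) ℝ} (hS : S.PosSemidef) :
    (S.map (fun x : ℝ => (x : ℂ))).PosSemidef := by
  obtain ⟨k, v, hv⟩ := Matrix.posSemidef_iff_eq_sum_vecMulVec.mp hS
  refine Matrix.posSemidef_iff_eq_sum_vecMulVec.mpr ⟨k, fun i j => ((v i j : ℝ) : ℂ), ?_⟩
  rw [hv]
  ext a b
  simp [Matrix.sum_apply, Matrix.vecMulVec_apply]

lemma pd_map_complex {m : ℕ} {H : Matrix (Fin m) (Fin m) ℝ} (hHdiag : H.IsDiag)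
    (hH : H.PosDef) : (H.map (fun x : ℝ => (x : ℂ))).PosDef := by
  have hd : Matrix.diagonal H.diag = H := hHdiag.diagonal_diag
  have hmap : H.map (fun x : ℝ => (x : ℂ)) =
      Matrix.diagonal (fun i => (H.diag i : ℂ)) := by
    rw [← hd]
    ext i j
    by_cases h : i = j <;> simp [Matrix.diagonal, h]
  rw [hmap]
  rw [Matrix.posDef_diagonal_iff]
  intro i
  rw [Complex.zero_lt_real]
  have := hH.dotProduct_mulVec_pos (x := Pi.single i 1) (by simp [Function.ne_iff])
  simpa [dotProduct, Matrix.mulVec, Pi.single_apply, Finset.sum_ite_eq] using this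

/-- For the clamped projection `P`, one has `H P D₄ P = Pᵀ N P`; in particular
`H P D₄ P` is symmetric positive semidefinite, and for every `a > 0` every
complex eigenvalue of `−a P D₄ P` is a real number `≤ 0`. -/
theorem sbp_projection_clamped_spectrum
    (m : ℕ) (hm : 1 ≤ m)
    (H N : Matrix (Fin m) (Fin m) ℝ)
    (hHdiag : H.IsDiag) (hH : H.PosDef) (hN : N.PosSemidef)
    (el er d1l d1r d2l d2r d3l d3r : Fin m → ℝ)
    (D4 : Matrix (Fin m) (Fin m) ℝ)
    (hD4 : D4 = H⁻¹ * (N + vecMulVec el d3l + vecMulVec d1l d2l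
      + vecMulVec er d3r - vecMulVec d1r d2r))
    (Lc : Matrix (Fin 4) (Fin m) ℝ)
    (hLc : Lc = Matrix.of ![el, d1l, er, d1r])
    (hLcInv : IsUnit (Lc * H⁻¹ * Lcᵀ))
    (P : Matrix (Fin m) (Fin m) ℝ)
    (hP : P = 1 - H⁻¹ * Lcᵀ * (Lc * H⁻¹ * Lcᵀ)⁻¹ * Lc) :
    H * P * D4 * P = Pᵀ * N * P ∧
    (H * P * D4 * P).PosSemidef ∧
    (∀ a : ℝ, 0 < a → ∀ μ : ℂ,
      μ ∈ spectrum ℂ ((-(a • (P * D4 * P))).map (fun x : ℝ => (x : ℂ))) →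
      μ.im = 0 ∧ μ.re ≤ 0) := by
  set M : Matrix (Fin 4) (Fin 4) ℝ := Lc * H⁻¹ * Lcᵀ with hMdef
  have hMinv : M * M⁻¹ = 1 :=
    Matrix.mul_nonsing_inv _ ((Matrix.isUnit_iff_isUnit_det M).mp hLcInv)
  -- Lc * P = 0
  have hLcP : Lc * P = 0 := by
    rw [hP, Matrix.mul_sub, Matrix.mul_one]
    have : Lc * (H⁻¹ * Lcᵀ * M⁻¹ * Lc) = (Lc * H⁻¹ * Lcᵀ) * M⁻¹ * Lc := by
      simp only [Matrix.mul_assoc]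
    rw [this, ← hMdef, hMinv, Matrix.one_mul, sub_self]
  -- symmetry facts
  have hHsymm : Hᵀ = H := hH.isHermitian
  have hHinvsymm : (H⁻¹)ᵀ = H⁻¹ := by
    rw [Matrix.transpose_nonsing_inv, hHsymm]
  have hHunit : IsUnit H.det := (Matrix.isUnit_iff_isUnit_det H).mp hH.isUnit
  have hHHinv : H * H⁻¹ = 1 := Matrix.mul_nonsing_inv _ hHunit
  have hMsymm : Mᵀ = M := by
    rw [hMdef, Matrix.transpose_mul, Matrix.transpose_mul, Matrix.transpose_transpose,
      hHinvsymm, Matrix.mul_assoc]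
  have hMinvsymm : (M⁻¹)ᵀ = M⁻¹ := by
    rw [Matrix.transpose_nonsing_inv, hMsymm]
  have hPT : Pᵀ = 1 - Lcᵀ * M⁻¹ * Lc * H⁻¹ := by
    rw [hP, Matrix.transpose_sub, Matrix.transpose_one]
    congr 1
    simp only [Matrix.transpose_mul, Matrix.transpose_transpose, hHinvsymm, hMinvsymm,
      Matrix.mul_assoc]
  have hHPHinv : H * P * H⁻¹ = Pᵀ := by
    rw [hPT, hP, Matrix.mul_sub, Matrix.mul_one, Matrix.sub_mul, hHHinv]
    congr 1
    rw [show H * (H⁻¹ * Lcᵀ * M⁻¹ * Lc) = (H * H⁻¹) * (Lcᵀ * M⁻¹ * Lc) by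
      simp only [Matrix.mul_assoc], hHHinv, Matrix.one_mul, Matrix.mul_assoc]
  -- rows of Lc killed by P on the left
  have hrow : ∀ r : Fin 4, ∀ i : Fin m, ∑ k, Lc r k * P k i = 0 := by
    intro r i
    have := congrFun (congrFun hLcP r) i
    simpa [Matrix.mul_apply] using this
  have hkey : ∀ (r : Fin 4) (w : Fin m → ℝ), Pᵀ * vecMulVec (Lc r) w = 0 := by
    intro r w
    ext i j
    rw [Matrix.mul_apply]
    simp only [Matrix.transpose_apply, Matrix.vecMulVec_apply, Matrix.zero_apply]
    calc ∑ k, P k i * (Lc r k * w j) = (∑ k, Lc r k * P k i) * w j := by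
          rw [Finset.sum_mul]; exact Finset.sum_congr rfl fun k _ => by ring
      _ = 0 := by rw [hrow r i, zero_mul]
  have hel : el = Lc 0 := by rw [hLc]; rfl
  have hd1l : d1l = Lc 1 := by rw [hLc]; rfl
  have her : er = Lc 2 := by rw [hLc]; rfl
  have hd1r : d1r = Lc 3 := by rw [hLc]; rfl
  have hmain : H * P * D4 * P = Pᵀ * N * P := by
    rw [hD4]
    rw [show H * P * (H⁻¹ * (N + vecMulVec el d3l + vecMulVec d1l d2l
      + vecMulVec er d3r - vecMulVec d1r d2r))
      = (H * P * H⁻¹) * (N + vecMulVec el d3l + vecMulVec d1l d2l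
      + vecMulVec er d3r - vecMulVec d1r d2r) by simp only [Matrix.mul_assoc]]
    rw [hHPHinv, Matrix.mul_sub, Matrix.mul_add, Matrix.mul_add, Matrix.mul_add,
      hel, hd1l, her, hd1r, hkey, hkey, hkey, hkey, add_zero, add_zero, add_zero,
      sub_zero]
  refine ⟨hmain, ?_, ?_⟩
  · rw [hmain]
    have := hN.conjTranspose_mul_mul_same P
    simpa using this
  · intro a ha μ hμ
    have hSpsd : (Pᵀ * N * P).PosSemidef := by simpa using hN.conjTranspose_mul_mul_same P
    set c : ℝ → ℂ := fun x : ℝ => (x : ℂ) with hc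
    set Areal : Matrix (Fin m) (Fin m) ℝ := -(a • (P * D4 * P)) with hAreal
    set Ac := Areal.map c with hAc
    set Hc := H.map c with hHc
    set Sc := (Pᵀ * N * P).map c with hSc
    have hHcPD : Hc.PosDef := pd_map_complex hHdiag hH
    have hScPSD : Sc.PosSemidef := psd_map_complex hSpsd
    have hHcAc : Hc * Ac = -((a : ℂ) • Sc) := by
      have h1 : H * Areal = -(a • (Pᵀ * N * P)) := by
        rw [hAreal, Matrix.mul_neg, Matrix.mul_smul]
        congr 2
        rw [← hmain]
        simp only [Matrix.mul_assoc]
      have h2 : (H * Areal).map c = Hc * Ac := by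
        ext i j
        simp only [Matrix.map_apply, Matrix.mul_apply, hc]
        push_cast
        rfl
      rw [← h2, h1]
      ext i j
      simp only [Matrix.map_apply, Matrix.neg_apply, Matrix.smul_apply, smul_eq_mul, hc, hSc]
      push_cast
      ring
    -- eigenvector
    have hev : Module.End.HasEigenvalue (Matrix.toLin' Ac) μ := by
      rw [Module.End.hasEigenvalue_iff_mem_spectrum]
      have := AlgEquiv.spectrum_eq (Matrix.toLinAlgEquiv' (R := ℂ) (n := Fin m)) Ac
      rw [show (Matrix.toLinAlgEquiv' (R := ℂ) (n := Fin m)) Ac = Matrix.toLin' Ac from rfl] at this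
      rw [this]
      exact hμ
    obtain ⟨v, hv⟩ := hev.exists_hasEigenvector
    have hAcv : Ac *ᵥ v = μ • v := by
      have := hv.apply_eq_smul
      rwa [Matrix.toLin'_apply] at this
    set p : ℂ := star v ⬝ᵥ (Hc *ᵥ v) with hpdef
    set q : ℂ := star v ⬝ᵥ (Sc *ᵥ v) with hqdef
    have hp : 0 < p := hHcPD.dotProduct_mulVec_pos hv.2
    have hq : 0 ≤ q := hScPSD.dotProduct_mulVec_nonneg v
    have heq : μ * p = -((a : ℂ) * q) := by
      have e1 : (Hc * Ac) *ᵥ v = μ • (Hc *ᵥ v) := by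
        rw [← Matrix.mulVec_mulVec, hAcv, Matrix.mulVec_smul]
      have e2 : (Hc * Ac) *ᵥ v = -((a : ℂ) • (Sc *ᵥ v)) := by
        rw [hHcAc, Matrix.neg_mulVec, Matrix.smul_mulVec]
      have e3 : star v ⬝ᵥ (μ • (Hc *ᵥ v)) = star v ⬝ᵥ (-((a : ℂ) • (Sc *ᵥ v))) := by
        rw [← e1, ← e2]
      simpa [dotProduct_smul, dotProduct_neg, smul_eq_mul] using e3
    have hpre : 0 < p.re := ((Complex.lt_def).mp hp).1
    have hpim : p.im = 0 := ((Complex.lt_def).mp hp).2.symm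
    have hqre : 0 ≤ q.re := ((Complex.le_def).mp hq).1
    have hqim : q.im = 0 := ((Complex.le_def).mp hq).2.symm
    have him : μ.im * p.re = 0 := by
      have := congrArg Complex.im heq
      simpa [Complex.mul_im, hpim, hqim] using this
    have hre : μ.re * p.re = -(a * q.re) := by
      have := congrArg Complex.re heq
      simpa [Complex.mul_re, hpim, hqim] using this
    constructor
    · exact (mul_eq_zero.mp him).resolve_right (ne_of_gt hpre)
    · by_contra hcon
      push_neg at hcon
      have h1 : 0 < μ.re * p.re := mul_pos hcon hpre
      have h2 : 0 ≤ a * q.re := mul_nonneg ha.le hqre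
      linarith
end
end

section
/- Assume the two-block SBP setup and the decomposition of N, and set τ = (a⁽¹⁾ + a⁽²⁾)/(4 α_III) and σ = (a⁽¹⁾ + a⁽²⁾)/(4 α_II). Let v⁽¹⁾, v⁽²⁾ : ℝ → ℝ^m be twice continuously differentiable and satisfy, for all t: b⁽¹⁾ (v⁽¹⁾)″ = −a⁽¹⁾ D₄ v⁽¹⁾ − H⁻¹ ((τ/h³) e_r + (a⁽¹⁾/2) d_{3;r}) (e_rᵀ v⁽¹⁾ − e_lᵀ v⁽²⁾) − H⁻¹ ((σ/h) d_{1;r} − (a⁽¹⁾/2) d_{2;r}) (d_{1;r}ᵀ v⁽¹⁾ + d_{1;l}ᵀ v⁽²⁾) − (1/2) H⁻¹ d_{1;r} (a⁽¹⁾ d_{2;r}ᵀ v⁽¹⁾ + a⁽²⁾ d_{2;l}ᵀ v⁽²⁾) + (1/2) H⁻¹ e_r (a⁽¹⁾ d_{3;r}ᵀ v⁽¹⁾ + a⁽²⁾ d_{3;l}ᵀ v⁽²⁾), and b⁽²⁾ (v⁽²⁾)″ = −a⁽²⁾ D₄ v⁽²⁾ + H⁻¹ ((τ/h³) e_l + (a⁽²⁾/2)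 d_{3;l}) (e_rᵀ v⁽¹⁾ − e_lᵀ v⁽²⁾) − H⁻¹ ((σ/h) d_{1;l} + (a⁽²⁾/2) d_{2;l}) (d_{1;r}ᵀ v⁽¹⁾ + d_{1;l}ᵀ v⁽²⁾) + (1/2) H⁻¹ d_{1;l} (a⁽¹⁾ d_{2;r}ᵀ v⁽¹⁾ + a⁽²⁾ d_{2;l}ᵀ v⁽²⁾) + (1/2) H⁻¹ e_l (a⁽¹⁾ d_{3;r}ᵀ v⁽¹⁾ + a⁽²⁾ d_{3;l}ᵀ v⁽²⁾). Assume further the homogeneous discrete clamped conditions at the outer boundaries for all t: e_lᵀ v⁽¹⁾(t) = 0, d_{1;l}ᵀ v⁽¹⁾(t) = 0, e_rᵀ v⁽²⁾(t) = 0, d_{1;r}ᵀ v⁽²⁾(t) = 0. Then the energy E(t) = b⁽¹⁾ ‖(v⁽¹⁾)′‖²_H + b⁽²⁾ ‖(v⁽²⁾)′‖²_H + a⁽¹⁾ (v⁽¹⁾)ᵀ Ñ v⁽¹⁾ + a⁽²⁾ (v⁽²⁾)ᵀ Ñ v⁽²⁾ + a⁽¹⁾ h α_II (d_{2;l}ᵀ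 v⁽¹⁾)² + a⁽¹⁾ h³ α_III (d_{3;l}ᵀ v⁽¹⁾)² + a⁽²⁾ h α_II (d_{2;r}ᵀ v⁽²⁾)² + a⁽²⁾ h³ α_III (d_{3;r}ᵀ v⁽²⁾)² + w₁ᵀ A₁ w₁ + w₂ᵀ A₂ w₂ is non-negative and constant in t, where w₁ = (e_rᵀ v⁽¹⁾, d_{3;r}ᵀ v⁽¹⁾, e_lᵀ v⁽²⁾, d_{3;l}ᵀ v⁽²⁾), w₂ = (d_{1;r}ᵀ v⁽¹⁾, d_{2;r}ᵀ v⁽¹⁾, d_{1;l}ᵀ v⁽²⁾, d_{2;l}ᵀ v⁽²⁾), A₁ = [[τ/h³, a⁽¹⁾/2, −τ/h³, −a⁽²⁾/2], [a⁽¹⁾/2, a⁽¹⁾ h³ α_III, −a⁽¹⁾/2, 0], [−τ/h³, −a⁽¹⁾/2, τ/h³, a⁽²⁾/2], [−a⁽²⁾/2, 0, a⁽²⁾/2, a⁽²⁾ h³ α_III]] and A₂ = [[σ/h, −a⁽¹⁾/2, σ/h, a⁽²⁾/2], [−a⁽¹⁾/2, a⁽¹⁾ h α_II, −a⁽¹⁾/2,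 0], [σ/h, −a⁽¹⁾/2, σ/h, a⁽²⁾/2], [a⁽²⁾/2, 0, a⁽²⁾/2, a⁽²⁾ h α_II]]. (This is the energy stability of the SBP-SAT interface coupling for the dynamic beam equation with piecewise constant coefficients.) -/
open Matrix

private lemma hasDerivAt_pi'' {n : ℕ} {f : ℝ → Fin n → ℝ} {f' : Fin n → ℝ} {t : ℝ}
    (hc : ∀ i, HasDerivAt (fun s => f s i) (f' i) t) : HasDerivAt f f' t := by
  exact hasDerivAt_pi.2 hc

private lemma hasDerivAt_dotc {n : ℕ} (a : Fin n → ℝ) {v : ℝ → Fin n → ℝ} {v' : Fin n → ℝ}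
    {t : ℝ} (hv : HasDerivAt v v' t) :
    HasDerivAt (fun s => a ⬝ᵥ v s) (a ⬝ᵥ v') t := by
  have hcomp : ∀ i : Fin n, HasDerivAt (fun s => v s i) (v' i) t := by
    intro i
    simpa using (hasFDerivAt_pi'.1 hv.hasFDerivAt i).hasDerivAt
  simpa [dotProduct] using HasDerivAt.fun_sum (fun i _ => (hcomp i).const_mul (a i))

private lemma hasDerivAt_quad {n : ℕ} (M : Matrix (Fin n) (Fin n) ℝ)
    {u w : ℝ → Fin n → ℝ} {u' w' : Fin n → ℝ} {t : ℝ}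
    (hu : HasDerivAt u u' t) (hw : HasDerivAt w w' t) :
    HasDerivAt (fun s => u s ⬝ᵥ (M *ᵥ w s))
      (u' ⬝ᵥ (M *ᵥ w t) + u t ⬝ᵥ (M *ᵥ w')) t := by
  have hui : ∀ i : Fin n, HasDerivAt (fun s => u s i) (u' i) t := fun i => by
    simpa using (hasFDerivAt_pi'.1 hu.hasFDerivAt i).hasDerivAt
  have hwi : ∀ i : Fin n, HasDerivAt (fun s => w s i) (w' i) t := fun i => by
    simpa using (hasFDerivAt_pi'.1 hw.hasFDerivAt i).hasDerivAt
  have key : HasDerivAt (fun s => ∑ i, ∑ j, u s i * (M i j * w s j))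
      (∑ i, ∑ j, (u' i * (M i j * w t j) + u t i * (M i j * w' j))) t :=
    HasDerivAt.fun_sum fun i _ => HasDerivAt.fun_sum fun j _ =>
      (hui i).mul ((hwi j).const_mul (M i j))
  have e1 : (fun s => u s ⬝ᵥ (M *ᵥ w s)) = fun s => ∑ i, ∑ j, u s i * (M i j * w s j) := by
    funext s; simp [dotProduct, mulVec, Finset.mul_sum]
  have e2 : u' ⬝ᵥ (M *ᵥ w t) + u t ⬝ᵥ (M *ᵥ w') =
      ∑ i, ∑ j, (u' i * (M i j * w t j) + u t i * (M i j * w' j)) := by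
    simp [dotProduct, mulVec, Finset.mul_sum, Finset.sum_add_distrib]
  rw [e1, e2]; exact key

private lemma vecMulVec_mulVec' {n : ℕ} (a b x : Fin n → ℝ) :
    vecMulVec a b *ᵥ x = (b ⬝ᵥ x) • a := by
  ext i
  simp only [mulVec, dotProduct, vecMulVec_apply, Pi.smul_apply, smul_eq_mul, Finset.sum_mul]
  exact Finset.sum_congr rfl fun j _ => by ring

private lemma dot_mulVec_symm {n : ℕ} {M : Matrix (Fin n) (Fin n) ℝ} (hM : Mᵀ = M)
    (u w : Fin n → ℝ) : u ⬝ᵥ (M *ᵥ w) = w ⬝ᵥ (M *ᵥ u) := by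
  rw [dotProduct_mulVec, ← mulVec_transpose, hM, dotProduct_comm]


set_option maxHeartbeats 1600000 in
/-- Energy stability of the SBP-SAT interface coupling for the dynamic beam
equation with piecewise constant coefficients, with penalty parameters
`τ = (a⁽¹⁾+a⁽²⁾)/(4α_III)`, `σ = (a⁽¹⁾+a⁽²⁾)/(4α_II)`. -/
theorem sbp_sat_interface_energy_stable
    (m : ℕ) (hm : 1 ≤ m)
    (H N : Matrix (Fin m) (Fin m) ℝ)
    (hHdiag : H.IsDiag) (hH : H.PosDef) (hN : N.PosSemidef)
    (el er d1l d1r d2l d2r d3l d3r : Fin m → ℝ)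
    (D4 : Matrix (Fin m) (Fin m) ℝ)
    (hD4 : D4 = H⁻¹ * (N + vecMulVec el d3l + vecMulVec d1l d2l
      + vecMulVec er d3r - vecMulVec d1r d2r))
    (Ntil : Matrix (Fin m) (Fin m) ℝ) (hNtil : Ntil.PosSemidef)
    (h αII αIII : ℝ) (hh : 0 < h) (hαII : 0 < αII) (hαIII : 0 < αIII)
    (hsplit : N = Ntil + (h * αII) • (vecMulVec d2l d2l + vecMulVec d2r d2r)
      + (h ^ 3 * αIII) • (vecMulVec d3l d3l + vecMulVec d3r d3r))
    (a1 a2 b1 b2 τ σ : ℝ)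
    (ha1 : 0 < a1) (ha2 : 0 < a2) (hb1 : 0 < b1) (hb2 : 0 < b2)
    (hτ : τ = (a1 + a2) / (4 * αIII)) (hσ : σ = (a1 + a2) / (4 * αII))
    (v1 v2 : ℝ → Fin m → ℝ) (hv1 : ContDiff ℝ 2 v1) (hv2 : ContDiff ℝ 2 v2)
    (hode1 : ∀ t : ℝ,
      b1 • deriv (deriv v1) t =
        -(a1 • (D4 *ᵥ v1 t))
        - ((er ⬝ᵥ v1 t) - (el ⬝ᵥ v2 t)) • (H⁻¹ *ᵥ ((τ / h ^ 3) • er + (a1 / 2) • d3r))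
        - ((d1r ⬝ᵥ v1 t) + (d1l ⬝ᵥ v2 t)) • (H⁻¹ *ᵥ ((σ / h) • d1r - (a1 / 2) • d2r))
        - ((a1 * (d2r ⬝ᵥ v1 t) + a2 * (d2l ⬝ᵥ v2 t)) / 2) • (H⁻¹ *ᵥ d1r)
        + ((a1 * (d3r ⬝ᵥ v1 t) + a2 * (d3l ⬝ᵥ v2 t)) / 2) • (H⁻¹ *ᵥ er))
    (hode2 : ∀ t : ℝ,
      b2 • deriv (deriv v2) t =
        -(a2 • (D4 *ᵥ v2 t))
        + ((er ⬝ᵥ v1 t) - (el ⬝ᵥ v2 t)) • (H⁻¹ *ᵥ ((τ / h ^ 3) • el + (a2 / 2) • d3l))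
        - ((d1r ⬝ᵥ v1 t) + (d1l ⬝ᵥ v2 t)) • (H⁻¹ *ᵥ ((σ / h) • d1l + (a2 / 2) • d2l))
        + ((a1 * (d2r ⬝ᵥ v1 t) + a2 * (d2l ⬝ᵥ v2 t)) / 2) • (H⁻¹ *ᵥ d1l)
        + ((a1 * (d3r ⬝ᵥ v1 t) + a2 * (d3l ⬝ᵥ v2 t)) / 2) • (H⁻¹ *ᵥ el))
    -- homogeneous discrete clamped conditions at the outer boundaries
    (hbc1 : ∀ t : ℝ, el ⬝ᵥ v1 t = 0) (hbc2 : ∀ t : ℝ, d1l ⬝ᵥ v1 t = 0)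
    (hbc3 : ∀ t : ℝ, er ⬝ᵥ v2 t = 0) (hbc4 : ∀ t : ℝ, d1r ⬝ᵥ v2 t = 0)
    (A1 A2 : Matrix (Fin 4) (Fin 4) ℝ)
    (hA1 : A1 = !![τ / h ^ 3, a1 / 2, -(τ / h ^ 3), -(a2 / 2);
                   a1 / 2, a1 * h ^ 3 * αIII, -(a1 / 2), 0;
                   -(τ / h ^ 3), -(a1 / 2), τ / h ^ 3, a2 / 2;
                   -(a2 / 2), 0, a2 / 2, a2 * h ^ 3 * αIII])
    (hA2 : A2 = !![σ / h, -(a1 / 2), σ / h, a2 / 2;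
                   -(a1 / 2), a1 * h * αII, -(a1 / 2), 0;
                   σ / h, -(a1 / 2), σ / h, a2 / 2;
                   a2 / 2, 0, a2 / 2, a2 * h * αII])
    (E : ℝ → ℝ)
    (hE : ∀ t : ℝ, E t =
      b1 * (deriv v1 t ⬝ᵥ (H *ᵥ deriv v1 t))
      + b2 * (deriv v2 t ⬝ᵥ (H *ᵥ deriv v2 t))
      + a1 * (v1 t ⬝ᵥ (Ntil *ᵥ v1 t))
      + a2 * (v2 t ⬝ᵥ (Ntil *ᵥ v2 t))
      + a1 * h * αII * (d2l ⬝ᵥ v1 t) ^ 2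
      + a1 * h ^ 3 * αIII * (d3l ⬝ᵥ v1 t) ^ 2
      + a2 * h * αII * (d2r ⬝ᵥ v2 t) ^ 2
      + a2 * h ^ 3 * αIII * (d3r ⬝ᵥ v2 t) ^ 2
      + (![er ⬝ᵥ v1 t, d3r ⬝ᵥ v1 t, el ⬝ᵥ v2 t, d3l ⬝ᵥ v2 t]
          ⬝ᵥ (A1 *ᵥ ![er ⬝ᵥ v1 t, d3r ⬝ᵥ v1 t, el ⬝ᵥ v2 t, d3l ⬝ᵥ v2 t]))
      + (![d1r ⬝ᵥ v1 t, d2r ⬝ᵥ v1 t, d1l ⬝ᵥ v2 t, d2l ⬝ᵥ v2 t]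
          ⬝ᵥ (A2 *ᵥ ![d1r ⬝ᵥ v1 t, d2r ⬝ᵥ v1 t, d1l ⬝ᵥ v2 t, d2l ⬝ᵥ v2 t]))) :
    (∀ t : ℝ, 0 ≤ E t) ∧ (∀ t s : ℝ, E t = E s) := by
  -- basic matrix facts
  have hHdet : IsUnit H.det := hH.det_pos.ne'.isUnit
  have hHinv : H * H⁻¹ = 1 := Matrix.mul_nonsing_inv H hHdet
  have hHsym : Hᵀ = H := hHdiag.isSymm
  have hNs : Ntilᵀ = Ntil := by
    rw [← Matrix.conjTranspose_eq_transpose_of_trivial]; exact hNtil.1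
  have hmv : ∀ x : Fin m → ℝ, H *ᵥ (H⁻¹ *ᵥ x) = x := by
    intro x; rw [mulVec_mulVec, hHinv, one_mulVec]
  have hHD4 : ∀ x : Fin m → ℝ, H *ᵥ (D4 *ᵥ x) =
      Ntil *ᵥ x + (h * αII) • ((d2l ⬝ᵥ x) • d2l + (d2r ⬝ᵥ x) • d2r)
      + (h ^ 3 * αIII) • ((d3l ⬝ᵥ x) • d3l + (d3r ⬝ᵥ x) • d3r)
      + (d3l ⬝ᵥ x) • el + (d2l ⬝ᵥ x) • d1l + (d3r ⬝ᵥ x) • er - (d2r ⬝ᵥ x) • d1r := by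
    intro x
    rw [mulVec_mulVec, hD4, ← Matrix.mul_assoc, hHinv, Matrix.one_mul, hsplit]
    simp only [add_mulVec, sub_mulVec, smul_mulVec, vecMulVec_mulVec']
  -- differentiability
  have hdv1 : Differentiable ℝ v1 := hv1.differentiable two_ne_zero
  have hdv2 : Differentiable ℝ v2 := hv2.differentiable two_ne_zero
  have e2 : (2 : WithTop ℕ∞) = 1 + 1 := by norm_num
  rw [e2] at hv1 hv2
  have hdd1 : Differentiable ℝ (deriv v1) :=
    ((contDiff_succ_iff_deriv.mp hv1).2.2).differentiable one_ne_zero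
  have hdd2 : Differentiable ℝ (deriv v2) :=
    ((contDiff_succ_iff_deriv.mp hv2).2.2).differentiable one_ne_zero
  have hd1 : ∀ s : ℝ, HasDerivAt v1 (deriv v1 s) s := fun s => (hdv1 s).hasDerivAt
  have hd2 : ∀ s : ℝ, HasDerivAt v2 (deriv v2 s) s := fun s => (hdv2 s).hasDerivAt
  have hd1' : ∀ s : ℝ, HasDerivAt (deriv v1) (deriv (deriv v1) s) s :=
    fun s => (hdd1 s).hasDerivAt
  have hd2' : ∀ s : ℝ, HasDerivAt (deriv v2) (deriv (deriv v2) s) s :=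
    fun s => (hdd2 s).hasDerivAt
  -- derivatives of boundary conditions
  have hbc1' : ∀ s : ℝ, el ⬝ᵥ deriv v1 s = 0 := by
    intro s
    have h1 := hasDerivAt_dotc el (hd1 s)
    have h0 : HasDerivAt (fun u => el ⬝ᵥ v1 u) 0 s := by
      have e : (fun u => el ⬝ᵥ v1 u) = fun _ => (0 : ℝ) := funext hbc1
      rw [e]; exact hasDerivAt_const s 0
    exact h1.unique h0
  have hbc2' : ∀ s : ℝ, d1l ⬝ᵥ deriv v1 s = 0 := by
    intro s
    have h1 := hasDerivAt_dotc d1l (hd1 s)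
    have h0 : HasDerivAt (fun u => d1l ⬝ᵥ v1 u) 0 s := by
      have e : (fun u => d1l ⬝ᵥ v1 u) = fun _ => (0 : ℝ) := funext hbc2
      rw [e]; exact hasDerivAt_const s 0
    exact h1.unique h0
  have hbc3' : ∀ s : ℝ, er ⬝ᵥ deriv v2 s = 0 := by
    intro s
    have h1 := hasDerivAt_dotc er (hd2 s)
    have h0 : HasDerivAt (fun u => er ⬝ᵥ v2 u) 0 s := by
      have e : (fun u => er ⬝ᵥ v2 u) = fun _ => (0 : ℝ) := funext hbc3
      rw [e]; exact hasDerivAt_const s 0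
    exact h1.unique h0
  have hbc4' : ∀ s : ℝ, d1r ⬝ᵥ deriv v2 s = 0 := by
    intro s
    have h1 := hasDerivAt_dotc d1r (hd2 s)
    have h0 : HasDerivAt (fun u => d1r ⬝ᵥ v2 u) 0 s := by
      have e : (fun u => d1r ⬝ᵥ v2 u) = fun _ => (0 : ℝ) := funext hbc4
      rw [e]; exact hasDerivAt_const s 0
    exact h1.unique h0
  -- Fin 4 quadratic form expansion
  have hquad4 : ∀ (B : Matrix (Fin 4) (Fin 4) ℝ) (p q : Fin 4 → ℝ),
      p ⬝ᵥ (B *ᵥ q) =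
        p 0 * (B 0 0 * q 0 + B 0 1 * q 1 + B 0 2 * q 2 + B 0 3 * q 3)
      + p 1 * (B 1 0 * q 0 + B 1 1 * q 1 + B 1 2 * q 2 + B 1 3 * q 3)
      + p 2 * (B 2 0 * q 0 + B 2 1 * q 1 + B 2 2 * q 2 + B 2 3 * q 3)
      + p 3 * (B 3 0 * q 0 + B 3 1 * q 1 + B 3 2 * q 2 + B 3 3 * q 3) := by
    intro B p q
    simp [dotProduct, mulVec, Fin.sum_univ_four]
    -- the energy has derivative zero everywhere
  have hE0 : ∀ t : ℝ, HasDerivAt E 0 t := by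
    intro t
    have hw1 : HasDerivAt (fun s => ![er ⬝ᵥ v1 s, d3r ⬝ᵥ v1 s, el ⬝ᵥ v2 s, d3l ⬝ᵥ v2 s])
        ![er ⬝ᵥ deriv v1 t, d3r ⬝ᵥ deriv v1 t, el ⬝ᵥ deriv v2 t, d3l ⬝ᵥ deriv v2 t] t := by
      apply hasDerivAt_pi''
      intro i
      fin_cases i
      · simpa using hasDerivAt_dotc er (hd1 t)
      · simpa using hasDerivAt_dotc d3r (hd1 t)
      · simpa using hasDerivAt_dotc el (hd2 t)
      · simpa using hasDerivAt_dotc d3l (hd2 t)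
    have hw2 : HasDerivAt (fun s => ![d1r ⬝ᵥ v1 s, d2r ⬝ᵥ v1 s, d1l ⬝ᵥ v2 s, d2l ⬝ᵥ v2 s])
        ![d1r ⬝ᵥ deriv v1 t, d2r ⬝ᵥ deriv v1 t, d1l ⬝ᵥ deriv v2 t, d2l ⬝ᵥ deriv v2 t] t := by
      apply hasDerivAt_pi''
      intro i
      fin_cases i
      · simpa using hasDerivAt_dotc d1r (hd1 t)
      · simpa using hasDerivAt_dotc d2r (hd1 t)
      · simpa using hasDerivAt_dotc d1l (hd2 t)
      · simpa using hasDerivAt_dotc d2l (hd2 t)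
    have key1 : b1 * (deriv (deriv v1) t ⬝ᵥ (H *ᵥ deriv v1 t)
        + deriv v1 t ⬝ᵥ (H *ᵥ deriv (deriv v1) t)) =
        2 * (-(a1 * (deriv v1 t ⬝ᵥ (Ntil *ᵥ v1 t)))
        - a1 * (h * αII) * ((d2l ⬝ᵥ deriv v1 t) * (d2l ⬝ᵥ v1 t)
            + (d2r ⬝ᵥ deriv v1 t) * (d2r ⬝ᵥ v1 t))
        - a1 * (h ^ 3 * αIII) * ((d3l ⬝ᵥ deriv v1 t) * (d3l ⬝ᵥ v1 t)
            + (d3r ⬝ᵥ deriv v1 t) * (d3r ⬝ᵥ v1 t))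
        - a1 * ((el ⬝ᵥ deriv v1 t) * (d3l ⬝ᵥ v1 t) + (d1l ⬝ᵥ deriv v1 t) * (d2l ⬝ᵥ v1 t)
            + (er ⬝ᵥ deriv v1 t) * (d3r ⬝ᵥ v1 t) - (d1r ⬝ᵥ deriv v1 t) * (d2r ⬝ᵥ v1 t))
        - ((er ⬝ᵥ v1 t) - (el ⬝ᵥ v2 t)) * ((τ / h ^ 3) * (er ⬝ᵥ deriv v1 t)
            + (a1 / 2) * (d3r ⬝ᵥ deriv v1 t))
        - ((d1r ⬝ᵥ v1 t) + (d1l ⬝ᵥ v2 t)) * ((σ / h) * (d1r ⬝ᵥ deriv v1 t)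
            - (a1 / 2) * (d2r ⬝ᵥ deriv v1 t))
        - ((a1 * (d2r ⬝ᵥ v1 t) + a2 * (d2l ⬝ᵥ v2 t)) / 2) * (d1r ⬝ᵥ deriv v1 t)
        + ((a1 * (d3r ⬝ᵥ v1 t) + a2 * (d3l ⬝ᵥ v2 t)) / 2) * (er ⬝ᵥ deriv v1 t)) := by
      rw [dot_mulVec_symm hHsym (deriv (deriv v1) t) (deriv v1 t)]
      rw [show b1 * (deriv v1 t ⬝ᵥ (H *ᵥ deriv (deriv v1) t)
          + deriv v1 t ⬝ᵥ (H *ᵥ deriv (deriv v1) t))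
          = 2 * (deriv v1 t ⬝ᵥ (H *ᵥ (b1 • deriv (deriv v1) t))) from by
        rw [mulVec_smul, dotProduct_smul, smul_eq_mul]; ring]
      rw [hode1 t]
      simp only [mulVec_add, mulVec_sub, mulVec_neg, mulVec_smul, hmv, hHD4]
      simp only [dotProduct_add, dotProduct_sub, dotProduct_neg, dotProduct_smul, smul_eq_mul,
        smul_add, smul_sub]
      simp only [dotProduct_comm (deriv v1 t)]
      ring
    have key2 : b2 * (deriv (deriv v2) t ⬝ᵥ (H *ᵥ deriv v2 t)
        + deriv v2 t ⬝ᵥ (H *ᵥ deriv (deriv v2) t)) =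
        2 * (-(a2 * (deriv v2 t ⬝ᵥ (Ntil *ᵥ v2 t)))
        - a2 * (h * αII) * ((d2l ⬝ᵥ deriv v2 t) * (d2l ⬝ᵥ v2 t)
            + (d2r ⬝ᵥ deriv v2 t) * (d2r ⬝ᵥ v2 t))
        - a2 * (h ^ 3 * αIII) * ((d3l ⬝ᵥ deriv v2 t) * (d3l ⬝ᵥ v2 t)
            + (d3r ⬝ᵥ deriv v2 t) * (d3r ⬝ᵥ v2 t))
        - a2 * ((el ⬝ᵥ deriv v2 t) * (d3l ⬝ᵥ v2 t) + (d1l ⬝ᵥ deriv v2 t) * (d2l ⬝ᵥ v2 t)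
            + (er ⬝ᵥ deriv v2 t) * (d3r ⬝ᵥ v2 t) - (d1r ⬝ᵥ deriv v2 t) * (d2r ⬝ᵥ v2 t))
        + ((er ⬝ᵥ v1 t) - (el ⬝ᵥ v2 t)) * ((τ / h ^ 3) * (el ⬝ᵥ deriv v2 t)
            + (a2 / 2) * (d3l ⬝ᵥ deriv v2 t))
        - ((d1r ⬝ᵥ v1 t) + (d1l ⬝ᵥ v2 t)) * ((σ / h) * (d1l ⬝ᵥ deriv v2 t)
            + (a2 / 2) * (d2l ⬝ᵥ deriv v2 t))
        + ((a1 * (d2r ⬝ᵥ v1 t) + a2 * (d2l ⬝ᵥ v2 t)) / 2) * (d1l ⬝ᵥ deriv v2 t)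
        + ((a1 * (d3r ⬝ᵥ v1 t) + a2 * (d3l ⬝ᵥ v2 t)) / 2) * (el ⬝ᵥ deriv v2 t)) := by
      rw [dot_mulVec_symm hHsym (deriv (deriv v2) t) (deriv v2 t)]
      rw [show b2 * (deriv v2 t ⬝ᵥ (H *ᵥ deriv (deriv v2) t)
          + deriv v2 t ⬝ᵥ (H *ᵥ deriv (deriv v2) t))
          = 2 * (deriv v2 t ⬝ᵥ (H *ᵥ (b2 • deriv (deriv v2) t))) from by
        rw [mulVec_smul, dotProduct_smul, smul_eq_mul]; ring]
      rw [hode2 t]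
      simp only [mulVec_add, mulVec_sub, mulVec_neg, mulVec_smul, hmv, hHD4]
      simp only [dotProduct_add, dotProduct_sub, dotProduct_neg, dotProduct_smul, smul_eq_mul,
        smul_add, smul_sub]
      simp only [dotProduct_comm (deriv v2 t)]
      ring
    have keyN1 : a1 * (deriv v1 t ⬝ᵥ (Ntil *ᵥ v1 t) + v1 t ⬝ᵥ (Ntil *ᵥ deriv v1 t))
        = 2 * (a1 * (deriv v1 t ⬝ᵥ (Ntil *ᵥ v1 t))) := by
      rw [dot_mulVec_symm hNs (v1 t) (deriv v1 t)]; ring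
    have keyN2 : a2 * (deriv v2 t ⬝ᵥ (Ntil *ᵥ v2 t) + v2 t ⬝ᵥ (Ntil *ᵥ deriv v2 t))
        = 2 * (a2 * (deriv v2 t ⬝ᵥ (Ntil *ᵥ v2 t))) := by
      rw [dot_mulVec_symm hNs (v2 t) (deriv v2 t)]; ring
    have hder : HasDerivAt (fun s =>
      b1 * (deriv v1 s ⬝ᵥ (H *ᵥ deriv v1 s))
      + b2 * (deriv v2 s ⬝ᵥ (H *ᵥ deriv v2 s))
      + a1 * (v1 s ⬝ᵥ (Ntil *ᵥ v1 s))
      + a2 * (v2 s ⬝ᵥ (Ntil *ᵥ v2 s))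
      + a1 * h * αII * (d2l ⬝ᵥ v1 s) ^ 2
      + a1 * h ^ 3 * αIII * (d3l ⬝ᵥ v1 s) ^ 2
      + a2 * h * αII * (d2r ⬝ᵥ v2 s) ^ 2
      + a2 * h ^ 3 * αIII * (d3r ⬝ᵥ v2 s) ^ 2
      + (![er ⬝ᵥ v1 s, d3r ⬝ᵥ v1 s, el ⬝ᵥ v2 s, d3l ⬝ᵥ v2 s]
          ⬝ᵥ (A1 *ᵥ ![er ⬝ᵥ v1 s, d3r ⬝ᵥ v1 s, el ⬝ᵥ v2 s, d3l ⬝ᵥ v2 s]))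
      + (![d1r ⬝ᵥ v1 s, d2r ⬝ᵥ v1 s, d1l ⬝ᵥ v2 s, d2l ⬝ᵥ v2 s]
          ⬝ᵥ (A2 *ᵥ ![d1r ⬝ᵥ v1 s, d2r ⬝ᵥ v1 s, d1l ⬝ᵥ v2 s, d2l ⬝ᵥ v2 s])))
      (b1 * (deriv (deriv v1) t ⬝ᵥ (H *ᵥ deriv v1 t)
          + deriv v1 t ⬝ᵥ (H *ᵥ deriv (deriv v1) t))
      + b2 * (deriv (deriv v2) t ⬝ᵥ (H *ᵥ deriv v2 t)
          + deriv v2 t ⬝ᵥ (H *ᵥ deriv (deriv v2) t))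
      + a1 * (deriv v1 t ⬝ᵥ (Ntil *ᵥ v1 t) + v1 t ⬝ᵥ (Ntil *ᵥ deriv v1 t))
      + a2 * (deriv v2 t ⬝ᵥ (Ntil *ᵥ v2 t) + v2 t ⬝ᵥ (Ntil *ᵥ deriv v2 t))
      + a1 * h * αII * (((2:ℕ):ℝ) * (d2l ⬝ᵥ v1 t) ^ (2 - 1) * (d2l ⬝ᵥ deriv v1 t))
      + a1 * h ^ 3 * αIII * (((2:ℕ):ℝ) * (d3l ⬝ᵥ v1 t) ^ (2 - 1) * (d3l ⬝ᵥ deriv v1 t))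
      + a2 * h * αII * (((2:ℕ):ℝ) * (d2r ⬝ᵥ v2 t) ^ (2 - 1) * (d2r ⬝ᵥ deriv v2 t))
      + a2 * h ^ 3 * αIII * (((2:ℕ):ℝ) * (d3r ⬝ᵥ v2 t) ^ (2 - 1) * (d3r ⬝ᵥ deriv v2 t))
      + (![er ⬝ᵥ deriv v1 t, d3r ⬝ᵥ deriv v1 t, el ⬝ᵥ deriv v2 t, d3l ⬝ᵥ deriv v2 t] ⬝ᵥ (A1 *ᵥ ![er ⬝ᵥ v1 t, d3r ⬝ᵥ v1 t, el ⬝ᵥ v2 t, d3l ⬝ᵥ v2 t]) + ![er ⬝ᵥ v1 t, d3r ⬝ᵥ v1 t, el ⬝ᵥ v2 t, d3l ⬝ᵥ v2 t] ⬝ᵥ (A1 *ᵥ ![er ⬝ᵥ deriv v1 t, d3r ⬝ᵥ deriv v1 t, el ⬝ᵥ deriv v2 t, d3l ⬝ᵥ deriv v2 t]))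
      + (![d1r ⬝ᵥ deriv v1 t, d2r ⬝ᵥ deriv v1 t, d1l ⬝ᵥ deriv v2 t, d2l ⬝ᵥ deriv v2 t] ⬝ᵥ (A2 *ᵥ ![d1r ⬝ᵥ v1 t, d2r ⬝ᵥ v1 t, d1l ⬝ᵥ v2 t, d2l ⬝ᵥ v2 t]) + ![d1r ⬝ᵥ v1 t, d2r ⬝ᵥ v1 t, d1l ⬝ᵥ v2 t, d2l ⬝ᵥ v2 t] ⬝ᵥ (A2 *ᵥ ![d1r ⬝ᵥ deriv v1 t, d2r ⬝ᵥ deriv v1 t, d1l ⬝ᵥ deriv v2 t, d2l ⬝ᵥ deriv v2 t]))) t := by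
      exact (((((((((((hasDerivAt_quad H (hd1' t) (hd1' t)).const_mul b1).add
        ((hasDerivAt_quad H (hd2' t) (hd2' t)).const_mul b2)).add
        ((hasDerivAt_quad Ntil (hd1 t) (hd1 t)).const_mul a1)).add
        ((hasDerivAt_quad Ntil (hd2 t) (hd2 t)).const_mul a2)).add
        (((hasDerivAt_dotc d2l (hd1 t)).pow 2).const_mul (a1 * h * αII))).add
        (((hasDerivAt_dotc d3l (hd1 t)).pow 2).const_mul (a1 * h ^ 3 * αIII))).add
        (((hasDerivAt_dotc d2r (hd2 t)).pow 2).const_mul (a2 * h * αII))).add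
        (((hasDerivAt_dotc d3r (hd2 t)).pow 2).const_mul (a2 * h ^ 3 * αIII))).add
        (hasDerivAt_quad A1 hw1 hw1)).add
        (hasDerivAt_quad A2 hw2 hw2))
    have h0 : (b1 * (deriv (deriv v1) t ⬝ᵥ (H *ᵥ deriv v1 t)
          + deriv v1 t ⬝ᵥ (H *ᵥ deriv (deriv v1) t))
      + b2 * (deriv (deriv v2) t ⬝ᵥ (H *ᵥ deriv v2 t)
          + deriv v2 t ⬝ᵥ (H *ᵥ deriv (deriv v2) t))
      + a1 * (deriv v1 t ⬝ᵥ (Ntil *ᵥ v1 t) + v1 t ⬝ᵥ (Ntil *ᵥ deriv v1 t))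
      + a2 * (deriv v2 t ⬝ᵥ (Ntil *ᵥ v2 t) + v2 t ⬝ᵥ (Ntil *ᵥ deriv v2 t))
      + a1 * h * αII * (((2:ℕ):ℝ) * (d2l ⬝ᵥ v1 t) ^ (2 - 1) * (d2l ⬝ᵥ deriv v1 t))
      + a1 * h ^ 3 * αIII * (((2:ℕ):ℝ) * (d3l ⬝ᵥ v1 t) ^ (2 - 1) * (d3l ⬝ᵥ deriv v1 t))
      + a2 * h * αII * (((2:ℕ):ℝ) * (d2r ⬝ᵥ v2 t) ^ (2 - 1) * (d2r ⬝ᵥ deriv v2 t))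
      + a2 * h ^ 3 * αIII * (((2:ℕ):ℝ) * (d3r ⬝ᵥ v2 t) ^ (2 - 1) * (d3r ⬝ᵥ deriv v2 t))
      + (![er ⬝ᵥ deriv v1 t, d3r ⬝ᵥ deriv v1 t, el ⬝ᵥ deriv v2 t, d3l ⬝ᵥ deriv v2 t] ⬝ᵥ (A1 *ᵥ ![er ⬝ᵥ v1 t, d3r ⬝ᵥ v1 t, el ⬝ᵥ v2 t, d3l ⬝ᵥ v2 t]) + ![er ⬝ᵥ v1 t, d3r ⬝ᵥ v1 t, el ⬝ᵥ v2 t, d3l ⬝ᵥ v2 t] ⬝ᵥ (A1 *ᵥ ![er ⬝ᵥ deriv v1 t, d3r ⬝ᵥ deriv v1 t, el ⬝ᵥ deriv v2 t, d3l ⬝ᵥ deriv v2 t]))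
      + (![d1r ⬝ᵥ deriv v1 t, d2r ⬝ᵥ deriv v1 t, d1l ⬝ᵥ deriv v2 t, d2l ⬝ᵥ deriv v2 t] ⬝ᵥ (A2 *ᵥ ![d1r ⬝ᵥ v1 t, d2r ⬝ᵥ v1 t, d1l ⬝ᵥ v2 t, d2l ⬝ᵥ v2 t]) + ![d1r ⬝ᵥ v1 t, d2r ⬝ᵥ v1 t, d1l ⬝ᵥ v2 t, d2l ⬝ᵥ v2 t] ⬝ᵥ (A2 *ᵥ ![d1r ⬝ᵥ deriv v1 t, d2r ⬝ᵥ deriv v1 t, d1l ⬝ᵥ deriv v2 t, d2l ⬝ᵥ deriv v2 t]))) = 0 := by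
      rw [key1, key2, keyN1, keyN2, hA1, hA2]
      simp only [hquad4]
      simp only [Matrix.cons_val_zero, Matrix.cons_val_one, Matrix.head_cons,
        Matrix.cons_val_two, Matrix.tail_cons, Matrix.cons_val_three, Matrix.of_apply,
        Matrix.cons_val', Matrix.empty_val', Matrix.cons_val_fin_one, Matrix.head_fin_const]
      simp only [hbc1' t, hbc2' t, hbc3' t, hbc4' t]
      norm_num
      ring
    have hEeq : E = fun s =>
      b1 * (deriv v1 s ⬝ᵥ (H *ᵥ deriv v1 s))
      + b2 * (deriv v2 s ⬝ᵥ (H *ᵥ deriv v2 s))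
      + a1 * (v1 s ⬝ᵥ (Ntil *ᵥ v1 s))
      + a2 * (v2 s ⬝ᵥ (Ntil *ᵥ v2 s))
      + a1 * h * αII * (d2l ⬝ᵥ v1 s) ^ 2
      + a1 * h ^ 3 * αIII * (d3l ⬝ᵥ v1 s) ^ 2
      + a2 * h * αII * (d2r ⬝ᵥ v2 s) ^ 2
      + a2 * h ^ 3 * αIII * (d3r ⬝ᵥ v2 s) ^ 2
      + (![er ⬝ᵥ v1 s, d3r ⬝ᵥ v1 s, el ⬝ᵥ v2 s, d3l ⬝ᵥ v2 s]
          ⬝ᵥ (A1 *ᵥ ![er ⬝ᵥ v1 s, d3r ⬝ᵥ v1 s, el ⬝ᵥ v2 s, d3l ⬝ᵥ v2 s]))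
      + (![d1r ⬝ᵥ v1 s, d2r ⬝ᵥ v1 s, d1l ⬝ᵥ v2 s, d2l ⬝ᵥ v2 s]
          ⬝ᵥ (A2 *ᵥ ![d1r ⬝ᵥ v1 s, d2r ⬝ᵥ v1 s, d1l ⬝ᵥ v2 s, d2l ⬝ᵥ v2 s])) := by
      funext s; exact hE s
    rw [hEeq]
    exact h0 ▸ hder
  -- sum-of-squares form of the interface quadratic forms
  have hsosA1 : ∀ p : Fin 4 → ℝ, 0 ≤ p ⬝ᵥ (A1 *ᵥ p) := by
    intro p
    have e : p ⬝ᵥ (A1 *ᵥ p) =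
        a1 * h ^ 3 * αIII * (p 1 + (p 0 - p 2) / (2 * h ^ 3 * αIII)) ^ 2
        + a2 * h ^ 3 * αIII * (p 3 - (p 0 - p 2) / (2 * h ^ 3 * αIII)) ^ 2 := by
      rw [hquad4, hA1, hτ]
      simp only [Matrix.cons_val_zero, Matrix.cons_val_one, Matrix.head_cons,
        Matrix.cons_val_two, Matrix.tail_cons, Matrix.cons_val_three, Matrix.of_apply,
        Matrix.cons_val', Matrix.empty_val', Matrix.cons_val_fin_one, Matrix.head_fin_const]
      field_simp
      ring
    rw [e]
    have c1 : (0:ℝ) ≤ a1 * h ^ 3 * αIII :=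
      mul_nonneg (mul_nonneg ha1.le (pow_nonneg hh.le 3)) hαIII.le
    have c2 : (0:ℝ) ≤ a2 * h ^ 3 * αIII :=
      mul_nonneg (mul_nonneg ha2.le (pow_nonneg hh.le 3)) hαIII.le
    exact add_nonneg (mul_nonneg c1 (sq_nonneg _)) (mul_nonneg c2 (sq_nonneg _))
  have hsosA2 : ∀ p : Fin 4 → ℝ, 0 ≤ p ⬝ᵥ (A2 *ᵥ p) := by
    intro p
    have e : p ⬝ᵥ (A2 *ᵥ p) =
        a1 * h * αII * (p 1 - (p 0 + p 2) / (2 * h * αII)) ^ 2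
        + a2 * h * αII * (p 3 + (p 0 + p 2) / (2 * h * αII)) ^ 2 := by
      rw [hquad4, hA2, hσ]
      simp only [Matrix.cons_val_zero, Matrix.cons_val_one, Matrix.head_cons,
        Matrix.cons_val_two, Matrix.tail_cons, Matrix.cons_val_three, Matrix.of_apply,
        Matrix.cons_val', Matrix.empty_val', Matrix.cons_val_fin_one, Matrix.head_fin_const]
      field_simp
      ring
    rw [e]
    have c1 : (0:ℝ) ≤ a1 * h * αII := mul_nonneg (mul_nonneg ha1.le hh.le) hαII.le
    have c2 : (0:ℝ) ≤ a2 * h * αII := mul_nonneg (mul_nonneg ha2.le hh.le) hαII.le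
    exact add_nonneg (mul_nonneg c1 (sq_nonneg _)) (mul_nonneg c2 (sq_nonneg _))
  have hHq : ∀ x : Fin m → ℝ, 0 ≤ x ⬝ᵥ (H *ᵥ x) := by
    intro x; simpa using hH.posSemidef.dotProduct_mulVec_nonneg x
  have hNq : ∀ x : Fin m → ℝ, 0 ≤ x ⬝ᵥ (Ntil *ᵥ x) := by
    intro x; simpa using hNtil.dotProduct_mulVec_nonneg x
  constructor
  · intro t
    rw [hE t]
    refine add_nonneg (add_nonneg (add_nonneg (add_nonneg (add_nonneg (add_nonneg
      (add_nonneg (add_nonneg (add_nonneg ?_ ?_) ?_) ?_) ?_) ?_) ?_) ?_) ?_) ?_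
    · exact mul_nonneg hb1.le (hHq _)
    · exact mul_nonneg hb2.le (hHq _)
    · exact mul_nonneg ha1.le (hNq _)
    · exact mul_nonneg ha2.le (hNq _)
    · exact mul_nonneg (mul_nonneg (mul_nonneg ha1.le hh.le) hαII.le) (sq_nonneg _)
    · exact mul_nonneg (mul_nonneg (mul_nonneg ha1.le (pow_nonneg hh.le 3)) hαIII.le)
        (sq_nonneg _)
    · exact mul_nonneg (mul_nonneg (mul_nonneg ha2.le hh.le) hαII.le) (sq_nonneg _)
    · exact mul_nonneg (mul_nonneg (mul_nonneg ha2.le (pow_nonneg hh.le 3)) hαIII.le)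
        (sq_nonneg _)
    · exact hsosA1 _
    · exact hsosA2 _
  · intro t s
    exact is_const_of_deriv_eq_zero (fun u => (hE0 u).differentiableAt)
      (fun u => (hE0 u).deriv) t s
end

section
/- Let a⁽¹⁾, a⁽²⁾, h, α_II, α_III be positive real numbers and set τ = (a⁽¹⁾ + a⁽²⁾)/(4 α_III) and σ = (a⁽¹⁾ + a⁽²⁾)/(4 α_II). Then the symmetric 4×4 real matrices A₁ = [[τ/h³, a⁽¹⁾/2, −τ/h³, −a⁽²⁾/2], [a⁽¹⁾/2, a⁽¹⁾ h³ α_III, −a⁽¹⁾/2, 0], [−τ/h³, −a⁽¹⁾/2, τ/h³, a⁽²⁾/2], [−a⁽²⁾/2, 0, a⁽²⁾/2, a⁽²⁾ h³ α_III]] and A₂ = [[σ/h, −a⁽¹⁾/2, σ/h, a⁽²⁾/2], [−a⁽¹⁾/2, a⁽¹⁾ h α_II, −a⁽¹⁾/2, 0], [σ/h, −a⁽¹⁾/2, σ/h, a⁽²⁾/2], [a⁽²⁾/2, 0, a⁽²⁾/2, a⁽²⁾ h α_II]] are both positive semidefinite. -/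
open Matrix

/-- The interface quadratic-form matrices `A₁`, `A₂` in the SBP-SAT energy
estimate for the interface coupling are positive semidefinite for the penalty
parameters `τ = (a⁽¹⁾+a⁽²⁾)/(4α_III)` and `σ = (a⁽¹⁾+a⁽²⁾)/(4α_II)`. -/
theorem sat_interface_matrices_psd
    (a1 a2 h αII αIII τ σ : ℝ)
    (ha1 : 0 < a1) (ha2 : 0 < a2) (hh : 0 < h) (hαII : 0 < αII) (hαIII : 0 < αIII)
    (hτ : τ = (a1 + a2) / (4 * αIII)) (hσ : σ = (a1 + a2) / (4 * αII)) :
    (!![τ / h ^ 3, a1 / 2, -(τ / h ^ 3), -(a2 / 2);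
        a1 / 2, a1 * h ^ 3 * αIII, -(a1 / 2), 0;
        -(τ / h ^ 3), -(a1 / 2), τ / h ^ 3, a2 / 2;
        -(a2 / 2), 0, a2 / 2, a2 * h ^ 3 * αIII] : Matrix (Fin 4) (Fin 4) ℝ).PosSemidef
    ∧
    (!![σ / h, -(a1 / 2), σ / h, a2 / 2;
        -(a1 / 2), a1 * h * αII, -(a1 / 2), 0;
        σ / h, -(a1 / 2), σ / h, a2 / 2;
        a2 / 2, 0, a2 / 2, a2 * h * αII] : Matrix (Fin 4) (Fin 4) ℝ).PosSemidef := by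
  subst hτ hσ
  constructor
  · refine Matrix.PosSemidef.of_dotProduct_mulVec_nonneg ?_ (fun x => ?_)
    · ext i j
      fin_cases i <;> fin_cases j <;> simp [Matrix.conjTranspose_apply]
    · have hx : star x ⬝ᵥ (!![(a1 + a2) / (4 * αIII) / h ^ 3, a1 / 2, -((a1 + a2) / (4 * αIII) / h ^ 3), -(a2 / 2);
        a1 / 2, a1 * h ^ 3 * αIII, -(a1 / 2), 0;
        -((a1 + a2) / (4 * αIII) / h ^ 3), -(a1 / 2), (a1 + a2) / (4 * αIII) / h ^ 3, a2 / 2;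
        -(a2 / 2), 0, a2 / 2, a2 * h ^ 3 * αIII] : Matrix (Fin 4) (Fin 4) ℝ) *ᵥ x
        = (a1 * (2 * h ^ 3 * αIII * x 1 + (x 0 - x 2)) ^ 2
          + a2 * (2 * h ^ 3 * αIII * x 3 - (x 0 - x 2)) ^ 2) / (4 * h ^ 3 * αIII) := by
        simp [Matrix.mulVec, dotProduct, Fin.sum_univ_four]
        field_simp
        ring
      rw [hx]
      positivity
  · refine Matrix.PosSemidef.of_dotProduct_mulVec_nonneg ?_ (fun x => ?_)
    · ext i j
      fin_cases i <;> fin_cases j <;> simp [Matrix.conjTranspose_apply]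
    · have hx : star x ⬝ᵥ (!![(a1 + a2) / (4 * αII) / h, -(a1 / 2), (a1 + a2) / (4 * αII) / h, a2 / 2;
        -(a1 / 2), a1 * h * αII, -(a1 / 2), 0;
        (a1 + a2) / (4 * αII) / h, -(a1 / 2), (a1 + a2) / (4 * αII) / h, a2 / 2;
        a2 / 2, 0, a2 / 2, a2 * h * αII] : Matrix (Fin 4) (Fin 4) ℝ) *ᵥ x
        = (a1 * (2 * h * αII * x 1 - (x 0 + x 2)) ^ 2
          + a2 * (2 * h * αII * x 3 + (x 0 + x 2)) ^ 2) / (4 * h * αII) := by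
        simp [Matrix.mulVec, dotProduct, Fin.sum_univ_four]
        field_simp
        ring
      rw [hx]
      positivity
end

section
/- Assume the two-block SBP setup. Let L be the 4×2m matrix whose rows are (e_rᵀ, −e_lᵀ), (d_{1;r}ᵀ, d_{1;l}ᵀ), (a⁽¹⁾ d_{2;r}ᵀ, a⁽²⁾ d_{2;l}ᵀ), (a⁽¹⁾ d_{3;r}ᵀ, a⁽²⁾ d_{3;l}ᵀ); assume L H̄⁻¹ Lᵀ is invertible and let P be the associated 2m×2m projection. Let w = (v⁽¹⁾; v⁽²⁾) : ℝ → ℝ^{2m} be twice continuously differentiable and satisfy, for all t, b⁽¹⁾ (v⁽¹⁾)″ = −(first block of P diag(a⁽¹⁾ D₄, a⁽²⁾ D₄) P w) and b⁽²⁾ (v⁽²⁾)″ = −(second block of P diag(a⁽¹⁾ D₄, a⁽²⁾ D₄) P w). Write P w(t) = (ṽ⁽¹⁾(t); ṽ⁽²⁾(t)), and assume the homogeneous discrete clamped conditions at the outer boundaries hold for the projected solution for all t: e_lᵀ ṽ⁽¹⁾(t) = 0, d_{1;l}ᵀ ṽ⁽¹⁾(t) = 0, e_rᵀ ṽ⁽²⁾(t)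 = 0, d_{1;r}ᵀ ṽ⁽²⁾(t) = 0. Then the energy E(t) = b⁽¹⁾ ‖(v⁽¹⁾)′‖²_H + b⁽²⁾ ‖(v⁽²⁾)′‖²_H + a⁽¹⁾ (ṽ⁽¹⁾)ᵀ N ṽ⁽¹⁾ + a⁽²⁾ (ṽ⁽²⁾)ᵀ N ṽ⁽²⁾ is non-negative and constant in t. (This is the energy stability of the SBP-projection interface coupling for the dynamic beam equation with piecewise constant coefficients.) -/
open Matrix

private lemma sbp_hasDerivAt_dot {ι : Type*} [Fintype ι] {x y : ℝ → ι → ℝ} {x' y' : ι → ℝ}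
    {t : ℝ}
    (hx : ∀ i, HasDerivAt (fun s => x s i) (x' i) t)
    (hy : ∀ i, HasDerivAt (fun s => y s i) (y' i) t) :
    HasDerivAt (fun s => x s ⬝ᵥ y s) (x' ⬝ᵥ y t + x t ⬝ᵥ y') t := by
  have h := HasDerivAt.fun_sum (u := Finset.univ) (fun i _ => (hx i).fun_mul (hy i))
  simp only [dotProduct]
  exact h.congr_deriv (by rw [Finset.sum_add_distrib])

private lemma sbp_hasDerivAt_mulVec {ι κ : Type*} [Fintype ι] (A : Matrix κ ι ℝ)
    {y : ℝ → ι → ℝ} {y' : ι → ℝ} {t : ℝ}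
    (hy : ∀ i, HasDerivAt (fun s => y s i) (y' i) t) (k : κ) :
    HasDerivAt (fun s => (A *ᵥ y s) k) ((A *ᵥ y') k) t := by
  simpa [mulVec, dotProduct] using
    HasDerivAt.fun_sum (u := Finset.univ) (fun i _ => (hy i).const_mul (A k i))

private lemma sbp_dot_vmv {ι : Type*} [Fintype ι] (x u v y : ι → ℝ) :
    x ⬝ᵥ ((vecMulVec u v) *ᵥ y) = (x ⬝ᵥ u) * (v ⬝ᵥ y) := by
  simp only [dotProduct, mulVec, vecMulVec_apply, Finset.mul_sum, Finset.sum_mul]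
  rw [Finset.sum_comm]
  refine Finset.sum_congr rfl fun k _ => Finset.sum_congr rfl fun j _ => by ring

private lemma sbp_dot_symm {ι : Type*} [Fintype ι] {A : Matrix ι ι ℝ} (hA : Aᵀ = A)
    (x y : ι → ℝ) : x ⬝ᵥ A *ᵥ y = y ⬝ᵥ A *ᵥ x := by
  calc x ⬝ᵥ A *ᵥ y = (x ᵥ* A) ⬝ᵥ y := dotProduct_mulVec ..
  _ = (A *ᵥ x) ⬝ᵥ y := by rw [← mulVec_transpose, hA]
  _ = y ⬝ᵥ A *ᵥ x := dotProduct_comm ..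

/-- Energy stability of the SBP-projection interface coupling for the dynamic
beam equation with piecewise constant coefficients. -/
theorem sbp_projection_interface_energy_stable
    (m : ℕ) (hm : 1 ≤ m)
    (H N : Matrix (Fin m) (Fin m) ℝ)
    (hHdiag : H.IsDiag) (hH : H.PosDef) (hN : N.PosSemidef)
    (el er d1l d1r d2l d2r d3l d3r : Fin m → ℝ)
    (D4 : Matrix (Fin m) (Fin m) ℝ)
    (hD4 : D4 = H⁻¹ * (N + vecMulVec el d3l + vecMulVec d1l d2l
      + vecMulVec er d3r - vecMulVec d1r d2r))
    (a1 a2 b1 b2 : ℝ)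
    (ha1 : 0 < a1) (ha2 : 0 < a2) (hb1 : 0 < b1) (hb2 : 0 < b2)
    (Hb : Matrix (Fin m ⊕ Fin m) (Fin m ⊕ Fin m) ℝ)
    (hHb : Hb = Matrix.fromBlocks H 0 0 H)
    (L : Matrix (Fin 4) (Fin m ⊕ Fin m) ℝ)
    (hL : L = Matrix.of ![Sum.elim er (-el), Sum.elim d1r d1l,
      Sum.elim (a1 • d2r) (a2 • d2l), Sum.elim (a1 • d3r) (a2 • d3l)])
    (hLInv : IsUnit (L * Hb⁻¹ * Lᵀ))
    (P : Matrix (Fin m ⊕ Fin m) (Fin m ⊕ Fin m) ℝ)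
    (hP : P = 1 - Hb⁻¹ * Lᵀ * (L * Hb⁻¹ * Lᵀ)⁻¹ * L)
    (Dblk : Matrix (Fin m ⊕ Fin m) (Fin m ⊕ Fin m) ℝ)
    (hDblk : Dblk = Matrix.fromBlocks (a1 • D4) 0 0 (a2 • D4))
    (v1 v2 : ℝ → Fin m → ℝ) (hv1 : ContDiff ℝ 2 v1) (hv2 : ContDiff ℝ 2 v2)
    (w : ℝ → Fin m ⊕ Fin m → ℝ) (hw : ∀ t : ℝ, w t = Sum.elim (v1 t) (v2 t))
    (hode : ∀ t : ℝ,
      Sum.elim (b1 • deriv (deriv v1) t) (b2 • deriv (deriv v2) t)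
        = -((P * Dblk * P) *ᵥ w t))
    (tv1 tv2 : ℝ → Fin m → ℝ)
    (htv1 : ∀ t : ℝ, tv1 t = fun i => (P *ᵥ w t) (Sum.inl i))
    (htv2 : ∀ t : ℝ, tv2 t = fun i => (P *ᵥ w t) (Sum.inr i))
    -- homogeneous discrete clamped outer boundary conditions for the projected solution
    (hbc1 : ∀ t : ℝ, el ⬝ᵥ tv1 t = 0) (hbc2 : ∀ t : ℝ, d1l ⬝ᵥ tv1 t = 0)
    (hbc3 : ∀ t : ℝ, er ⬝ᵥ tv2 t = 0) (hbc4 : ∀ t : ℝ, d1r ⬝ᵥ tv2 t = 0)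
    (E : ℝ → ℝ)
    (hE : ∀ t : ℝ, E t =
      b1 * (deriv v1 t ⬝ᵥ (H *ᵥ deriv v1 t))
      + b2 * (deriv v2 t ⬝ᵥ (H *ᵥ deriv v2 t))
      + a1 * (tv1 t ⬝ᵥ (N *ᵥ tv1 t))
      + a2 * (tv2 t ⬝ᵥ (N *ᵥ tv2 t))) :
    (∀ t : ℝ, 0 ≤ E t) ∧ (∀ t s : ℝ, E t = E s) := by
  -- symmetry and invertibility facts
  have hHsym : Hᵀ = H := by
    ext i j; exact (congrFun (congrFun hH.1 j) i).symm
  have hNsym : Nᵀ = N := by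
    ext i j; exact (congrFun (congrFun hN.1 j) i).symm
  have hHdet : IsUnit H.det := isUnit_iff_ne_zero.mpr hH.det_pos.ne'
  have hHbdet : IsUnit Hb.det := by
    rw [hHb, det_fromBlocks_zero₂₁]; exact hHdet.mul hHdet
  have hHbsym : Hbᵀ = Hb := by
    rw [hHb, fromBlocks_transpose, hHsym, transpose_zero]
  have hHbisym : Hb⁻¹ᵀ = Hb⁻¹ := by rw [transpose_nonsing_inv, hHbsym]
  set M := L * Hb⁻¹ * Lᵀ with hM
  have hMdet : IsUnit M.det := (isUnit_iff_isUnit_det M).mp hLInv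
  have hMsym : Mᵀ = M := by
    rw [hM]; simp [transpose_mul, hHbisym, Matrix.mul_assoc]
  have hMinvsym : M⁻¹ᵀ = M⁻¹ := by rw [transpose_nonsing_inv, hMsym]
  have hLP : L * P = 0 := by
    rw [hP, Matrix.mul_sub, Matrix.mul_one]
    have : L * (Hb⁻¹ * Lᵀ * M⁻¹ * L) = M * (M⁻¹ * L) := by
      rw [hM]; simp only [Matrix.mul_assoc]
    rw [this, Matrix.mul_nonsing_inv_cancel_left _ _ hMdet, sub_self]
  have hHbP : Pᵀ * Hb = Hb * P := by
    rw [hP]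
    have h1 : (1 - Hb⁻¹ * Lᵀ * M⁻¹ * L)ᵀ = 1 - Lᵀ * M⁻¹ * (L * Hb⁻¹) := by
      simp [transpose_sub, transpose_mul, hMinvsym, hHbisym, Matrix.mul_assoc]
    rw [h1, Matrix.sub_mul, Matrix.mul_sub, Matrix.one_mul, Matrix.mul_one]
    congr 1
    have lhs : Lᵀ * M⁻¹ * (L * Hb⁻¹) * Hb = Lᵀ * (M⁻¹ * L) := by
      rw [Matrix.mul_assoc (Lᵀ * M⁻¹) (L * Hb⁻¹) Hb, Matrix.mul_assoc L Hb⁻¹ Hb,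
        Matrix.nonsing_inv_mul _ hHbdet, Matrix.mul_one, Matrix.mul_assoc]
    have rhs : Hb * (Hb⁻¹ * Lᵀ * M⁻¹ * L) = Lᵀ * (M⁻¹ * L) := by
      rw [show Hb⁻¹ * Lᵀ * M⁻¹ * L = Hb⁻¹ * (Lᵀ * (M⁻¹ * L)) by
        simp only [Matrix.mul_assoc]]
      exact Matrix.mul_nonsing_inv_cancel_left _ _ hHbdet
    rw [lhs, rhs]
  have hHD4 : H * D4 = N + vecMulVec el d3l + vecMulVec d1l d2l
      + vecMulVec er d3r - vecMulVec d1r d2r := by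
    rw [hD4, Matrix.mul_nonsing_inv_cancel_left _ _ hHdet]
  -- differentiability
  have h2eq : (2 : WithTop ℕ∞) = 1 + 1 := by norm_num
  have hd1 : Differentiable ℝ v1 := hv1.differentiable (by norm_num)
  have hd2 : Differentiable ℝ v2 := hv2.differentiable (by norm_num)
  have hd1' : Differentiable ℝ (deriv v1) := by
    rw [h2eq] at hv1
    exact (contDiff_succ_iff_deriv.mp hv1).2.2.differentiable one_ne_zero
  have hd2' : Differentiable ℝ (deriv v2) := by
    rw [h2eq] at hv2
    exact (contDiff_succ_iff_deriv.mp hv2).2.2.differentiable one_ne_zero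
  -- nonnegativity
  have hnonneg : ∀ t, 0 ≤ E t := by
    intro t
    have qH : ∀ (x : Fin m → ℝ), 0 ≤ x ⬝ᵥ H *ᵥ x := fun x => by
      simpa using hH.posSemidef.dotProduct_mulVec_nonneg x
    have qN : ∀ (x : Fin m → ℝ), 0 ≤ x ⬝ᵥ N *ᵥ x := fun x => by
      simpa using hN.dotProduct_mulVec_nonneg x
    rw [hE t]
    exact add_nonneg (add_nonneg (add_nonneg (mul_nonneg hb1.le (qH _))
      (mul_nonneg hb2.le (qH _))) (mul_nonneg ha1.le (qN _))) (mul_nonneg ha2.le (qN _))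
  refine ⟨hnonneg, ?_⟩
  -- the projected vector
  have hz : ∀ s, P *ᵥ w s = Sum.elim (tv1 s) (tv2 s) := by
    intro s; funext k; cases k <;> simp [htv1 s, htv2 s]
  -- interface identities from L * P = 0
  have hLz : ∀ s, L *ᵥ (Sum.elim (tv1 s) (tv2 s)) = 0 := by
    intro s; rw [← hz, mulVec_mulVec, hLP, zero_mulVec]
  have hI1 : ∀ s, er ⬝ᵥ tv1 s - el ⬝ᵥ tv2 s = 0 := by
    intro s
    have h := congrFun (hLz s) 0
    rw [hL] at h
    simpa [mulVec, sumElim_dotProduct_sumElim, neg_dotProduct, sub_eq_add_neg] using h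
  have hI2 : ∀ s, d1r ⬝ᵥ tv1 s + d1l ⬝ᵥ tv2 s = 0 := by
    intro s
    have h := congrFun (hLz s) 1
    rw [hL] at h
    simpa [mulVec, sumElim_dotProduct_sumElim] using h
  have hI3 : ∀ s, a1 * (d2r ⬝ᵥ tv1 s) + a2 * (d2l ⬝ᵥ tv2 s) = 0 := by
    intro s
    have h := congrFun (hLz s) 2
    rw [hL] at h
    simpa [mulVec, sumElim_dotProduct_sumElim, smul_dotProduct, smul_eq_mul] using h
  have hI4 : ∀ s, a1 * (d3r ⬝ᵥ tv1 s) + a2 * (d3l ⬝ᵥ tv2 s) = 0 := by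
    intro s
    have h := congrFun (hLz s) 3
    rw [hL] at h
    simpa [mulVec, sumElim_dotProduct_sumElim, smul_dotProduct, smul_eq_mul] using h
  -- the energy has zero derivative everywhere
  have key : ∀ t, HasDerivAt E 0 t := by
    intro t
    -- componentwise derivatives
    have hu1 : ∀ i, HasDerivAt (fun s => v1 s i) (deriv v1 t i) t :=
      hasDerivAt_pi.mp (hd1 t).hasDerivAt
    have hu2 : ∀ i, HasDerivAt (fun s => v2 s i) (deriv v2 t i) t :=
      hasDerivAt_pi.mp (hd2 t).hasDerivAt
    have hu1' : ∀ i, HasDerivAt (fun s => deriv v1 s i) (deriv (deriv v1) t i) t :=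
      hasDerivAt_pi.mp (hd1' t).hasDerivAt
    have hu2' : ∀ i, HasDerivAt (fun s => deriv v2 s i) (deriv (deriv v2) t i) t :=
      hasDerivAt_pi.mp (hd2' t).hasDerivAt
    set u1 : Fin m → ℝ := deriv v1 t with hu1def
    set u2 : Fin m → ℝ := deriv v2 t with hu2def
    set du1 : Fin m → ℝ := deriv (deriv v1) t with hdu1def
    set du2 : Fin m → ℝ := deriv (deriv v2) t with hdu2def
    set w' : Fin m ⊕ Fin m → ℝ := Sum.elim u1 u2 with hw'def
    have hwc : ∀ k, HasDerivAt (fun s => w s k) (w' k) t := by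
      intro k; cases k with
      | inl i => simpa only [hw, Sum.elim_inl, hw'def] using hu1 i
      | inr i => simpa only [hw, Sum.elim_inr, hw'def] using hu2 i
    set tv1' : Fin m → ℝ := fun i => (P *ᵥ w') (Sum.inl i) with htv1'def
    set tv2' : Fin m → ℝ := fun i => (P *ᵥ w') (Sum.inr i) with htv2'def
    have hzw' : P *ᵥ w' = Sum.elim tv1' tv2' := by
      funext k; cases k with
      | inl i => rfl
      | inr i => rfl
    have htv1c : ∀ i, HasDerivAt (fun s => tv1 s i) (tv1' i) t := by
      intro i
      have h := sbp_hasDerivAt_mulVec P hwc (Sum.inl i)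
      simp only [htv1]
      exact h
    have htv2c : ∀ i, HasDerivAt (fun s => tv2 s i) (tv2' i) t := by
      intro i
      have h := sbp_hasDerivAt_mulVec P hwc (Sum.inr i)
      simp only [htv2]
      exact h
    -- derivative of zero scalar functions
    have hderiv0 : ∀ (f : ℝ → ℝ) (c : ℝ), (∀ s, f s = 0) → HasDerivAt f c t → c = 0 := by
      intro f c hf hc
      have hf' : f = fun _ => 0 := funext hf
      rw [hf'] at hc
      exact hc.unique (hasDerivAt_const t 0)
    have hconstdot : ∀ (c : Fin m → ℝ) (y : ℝ → Fin m → ℝ) (y' : Fin m → ℝ),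
        (∀ i, HasDerivAt (fun s => y s i) (y' i) t) →
        HasDerivAt (fun s => c ⬝ᵥ y s) (c ⬝ᵥ y') t := by
      intro c y y' hy
      have h := sbp_hasDerivAt_dot (x := fun _ => c) (x' := 0)
        (fun i => hasDerivAt_const t (c i)) hy
      simpa using h
    -- derivative versions of boundary conditions
    have hc1 : el ⬝ᵥ tv1' = 0 := hderiv0 _ _ hbc1 (hconstdot el tv1 tv1' htv1c)
    have hc2 : d1l ⬝ᵥ tv1' = 0 := hderiv0 _ _ hbc2 (hconstdot d1l tv1 tv1' htv1c)
    have hc3 : er ⬝ᵥ tv2' = 0 := hderiv0 _ _ hbc3 (hconstdot er tv2 tv2' htv2c)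
    have hc4 : d1r ⬝ᵥ tv2' = 0 := hderiv0 _ _ hbc4 (hconstdot d1r tv2 tv2' htv2c)
    -- derivative versions of interface conditions
    have hI1' : er ⬝ᵥ tv1' - el ⬝ᵥ tv2' = 0 :=
      hderiv0 _ _ hI1 ((hconstdot er tv1 tv1' htv1c).sub (hconstdot el tv2 tv2' htv2c))
    have hI2' : d1r ⬝ᵥ tv1' + d1l ⬝ᵥ tv2' = 0 :=
      hderiv0 _ _ hI2 ((hconstdot d1r tv1 tv1' htv1c).add (hconstdot d1l tv2 tv2' htv2c))
    -- the ODE, dotted with the velocity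
    have hX : b1 * (du1 ⬝ᵥ H *ᵥ u1) + b2 * (du2 ⬝ᵥ H *ᵥ u2)
        = -(a1 * (tv1' ⬝ᵥ (H * D4) *ᵥ tv1 t) + a2 * (tv2' ⬝ᵥ (H * D4) *ᵥ tv2 t)) := by
      have hHbw' : Hb *ᵥ w' = Sum.elim (H *ᵥ u1) (H *ᵥ u2) := by
        rw [hw'def, hHb, fromBlocks_mulVec]
        simp [Sum.elim_comp_inl, Sum.elim_comp_inr]
      have step1 : b1 * (du1 ⬝ᵥ H *ᵥ u1) + b2 * (du2 ⬝ᵥ H *ᵥ u2)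
          = Sum.elim (b1 • du1) (b2 • du2) ⬝ᵥ (Hb *ᵥ w') := by
        rw [hHbw', sumElim_dotProduct_sumElim, smul_dotProduct, smul_dotProduct,
          smul_eq_mul, smul_eq_mul]
      rw [step1, hode t]
      -- now: -((P*Dblk*P) *ᵥ w t) ⬝ᵥ (Hb *ᵥ w') = ...
      have step2 : ((P * Dblk * P) *ᵥ w t) ⬝ᵥ (Hb *ᵥ w')
          = (Sum.elim (tv1 t) (tv2 t)) ⬝ᵥ ((Dblkᵀ * Hb) *ᵥ (Sum.elim tv1' tv2')) := by
        calc ((P * Dblk * P) *ᵥ w t) ⬝ᵥ (Hb *ᵥ w')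
            = (w t ᵥ* (P * Dblk * P)ᵀ) ⬝ᵥ (Hb *ᵥ w') := by rw [vecMul_transpose]
          _ = w t ⬝ᵥ ((P * Dblk * P)ᵀ *ᵥ (Hb *ᵥ w')) :=
              (dotProduct_mulVec _ _ _).symm
          _ = w t ⬝ᵥ (Pᵀ *ᵥ ((Dblkᵀ * Hb) *ᵥ (P *ᵥ w'))) := by
              rw [mulVec_mulVec, mulVec_mulVec, mulVec_mulVec]
              congr 1
              rw [transpose_mul, transpose_mul, Matrix.mul_assoc Pᵀ (Dblkᵀ * Pᵀ) Hb,
                Matrix.mul_assoc Dblkᵀ Pᵀ Hb, hHbP, ← Matrix.mul_assoc Dblkᵀ Hb P]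
              simp only [Matrix.mul_assoc]
          _ = (w t ᵥ* Pᵀ) ⬝ᵥ ((Dblkᵀ * Hb) *ᵥ (P *ᵥ w')) := by rw [dotProduct_mulVec]
          _ = (P *ᵥ w t) ⬝ᵥ ((Dblkᵀ * Hb) *ᵥ (P *ᵥ w')) := by rw [vecMul_transpose]
          _ = (Sum.elim (tv1 t) (tv2 t)) ⬝ᵥ ((Dblkᵀ * Hb) *ᵥ (Sum.elim tv1' tv2')) := by
              rw [hz t, hzw']
      have step3 : (Sum.elim (tv1 t) (tv2 t)) ⬝ᵥ ((Dblkᵀ * Hb) *ᵥ (Sum.elim tv1' tv2'))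
          = a1 * (tv1' ⬝ᵥ (H * D4) *ᵥ tv1 t) + a2 * (tv2' ⬝ᵥ (H * D4) *ᵥ tv2 t) := by
        have e1 : (Sum.elim (tv1 t) (tv2 t)) ⬝ᵥ ((Dblkᵀ * Hb) *ᵥ (Sum.elim tv1' tv2'))
            = (Dblk *ᵥ Sum.elim (tv1 t) (tv2 t)) ⬝ᵥ (Hb *ᵥ (Sum.elim tv1' tv2')) := by
          rw [← mulVec_mulVec, dotProduct_mulVec, vecMul_transpose]
        have e2 : Dblk *ᵥ Sum.elim (tv1 t) (tv2 t)
            = Sum.elim (a1 • (D4 *ᵥ tv1 t)) (a2 • (D4 *ᵥ tv2 t)) := by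
          rw [hDblk, fromBlocks_mulVec]
          simp [Sum.elim_comp_inl, Sum.elim_comp_inr, smul_mulVec]
        have e3 : Hb *ᵥ (Sum.elim tv1' tv2') = Sum.elim (H *ᵥ tv1') (H *ᵥ tv2') := by
          rw [hHb, fromBlocks_mulVec]
          simp [Sum.elim_comp_inl, Sum.elim_comp_inr]
        have e4 : ∀ (x y : Fin m → ℝ), (D4 *ᵥ x) ⬝ᵥ (H *ᵥ y) = y ⬝ᵥ (H * D4) *ᵥ x := by
          intro x y
          calc (D4 *ᵥ x) ⬝ᵥ (H *ᵥ y) = (H *ᵥ y) ⬝ᵥ (D4 *ᵥ x) := dotProduct_comm ..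
            _ = (y ᵥ* Hᵀ) ⬝ᵥ (D4 *ᵥ x) := by rw [vecMul_transpose]
            _ = (y ᵥ* H) ⬝ᵥ (D4 *ᵥ x) := by rw [hHsym]
            _ = y ⬝ᵥ (H *ᵥ (D4 *ᵥ x)) := (dotProduct_mulVec y H (D4 *ᵥ x)).symm
            _ = y ⬝ᵥ (H * D4) *ᵥ x := by rw [mulVec_mulVec]
        rw [e1, e2, e3, sumElim_dotProduct_sumElim, smul_dotProduct, smul_dotProduct,
          smul_eq_mul, smul_eq_mul, e4, e4]
      rw [neg_dotProduct, step2, step3]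
    -- expand H*D4 in hX
    have hSexp : ∀ (x' x : Fin m → ℝ), x' ⬝ᵥ (H * D4) *ᵥ x
        = x' ⬝ᵥ N *ᵥ x + (x' ⬝ᵥ el) * (d3l ⬝ᵥ x) + (x' ⬝ᵥ d1l) * (d2l ⬝ᵥ x)
          + (x' ⬝ᵥ er) * (d3r ⬝ᵥ x) - (x' ⬝ᵥ d1r) * (d2r ⬝ᵥ x) := by
      intro x' x
      rw [hHD4, sub_mulVec, add_mulVec, add_mulVec, add_mulVec,
        dotProduct_sub, dotProduct_add, dotProduct_add, dotProduct_add,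
        sbp_dot_vmv, sbp_dot_vmv, sbp_dot_vmv, sbp_dot_vmv]
    -- assemble the derivative of E
    have hEfun : E = fun s =>
        b1 * (deriv v1 s ⬝ᵥ (H *ᵥ deriv v1 s))
        + b2 * (deriv v2 s ⬝ᵥ (H *ᵥ deriv v2 s))
        + a1 * (tv1 s ⬝ᵥ (N *ᵥ tv1 s))
        + a2 * (tv2 s ⬝ᵥ (N *ᵥ tv2 s)) := funext hE
    have hq1 : HasDerivAt (fun s => deriv v1 s ⬝ᵥ (H *ᵥ deriv v1 s))
        (du1 ⬝ᵥ (H *ᵥ u1) + u1 ⬝ᵥ (H *ᵥ du1)) t :=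
      sbp_hasDerivAt_dot hu1' (fun i => sbp_hasDerivAt_mulVec H hu1' i)
    have hq2 : HasDerivAt (fun s => deriv v2 s ⬝ᵥ (H *ᵥ deriv v2 s))
        (du2 ⬝ᵥ (H *ᵥ u2) + u2 ⬝ᵥ (H *ᵥ du2)) t :=
      sbp_hasDerivAt_dot hu2' (fun i => sbp_hasDerivAt_mulVec H hu2' i)
    have hq3 : HasDerivAt (fun s => tv1 s ⬝ᵥ (N *ᵥ tv1 s))
        (tv1' ⬝ᵥ (N *ᵥ tv1 t) + tv1 t ⬝ᵥ (N *ᵥ tv1')) t :=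
      sbp_hasDerivAt_dot htv1c (fun i => sbp_hasDerivAt_mulVec N htv1c i)
    have hq4 : HasDerivAt (fun s => tv2 s ⬝ᵥ (N *ᵥ tv2 s))
        (tv2' ⬝ᵥ (N *ᵥ tv2 t) + tv2 t ⬝ᵥ (N *ᵥ tv2')) t :=
      sbp_hasDerivAt_dot htv2c (fun i => sbp_hasDerivAt_mulVec N htv2c i)
    have hbig : HasDerivAt E
        (b1 * (du1 ⬝ᵥ (H *ᵥ u1) + u1 ⬝ᵥ (H *ᵥ du1))
          + b2 * (du2 ⬝ᵥ (H *ᵥ u2) + u2 ⬝ᵥ (H *ᵥ du2))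
          + a1 * (tv1' ⬝ᵥ (N *ᵥ tv1 t) + tv1 t ⬝ᵥ (N *ᵥ tv1'))
          + a2 * (tv2' ⬝ᵥ (N *ᵥ tv2 t) + tv2 t ⬝ᵥ (N *ᵥ tv2'))) t := by
      rw [hEfun]
      exact (((hq1.const_mul b1).add (hq2.const_mul b2)).add (hq3.const_mul a1)).add
        (hq4.const_mul a2)
    -- show the derivative is zero
    have hzero : b1 * (du1 ⬝ᵥ (H *ᵥ u1) + u1 ⬝ᵥ (H *ᵥ du1))
          + b2 * (du2 ⬝ᵥ (H *ᵥ u2) + u2 ⬝ᵥ (H *ᵥ du2))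
          + a1 * (tv1' ⬝ᵥ (N *ᵥ tv1 t) + tv1 t ⬝ᵥ (N *ᵥ tv1'))
          + a2 * (tv2' ⬝ᵥ (N *ᵥ tv2 t) + tv2 t ⬝ᵥ (N *ᵥ tv2')) = 0 := by
      rw [sbp_dot_symm hHsym u1 du1, sbp_dot_symm hHsym u2 du2,
        sbp_dot_symm hNsym (tv1 t) tv1', sbp_dot_symm hNsym (tv2 t) tv2']
      rw [hSexp tv1' (tv1 t), hSexp tv2' (tv2 t)] at hX
      -- reorient boundary-condition dot products
      rw [dotProduct_comm el tv1'] at hc1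
      rw [dotProduct_comm d1l tv1'] at hc2
      rw [dotProduct_comm er tv2'] at hc3
      rw [dotProduct_comm d1r tv2'] at hc4
      rw [dotProduct_comm er tv1', dotProduct_comm el tv2'] at hI1'
      rw [dotProduct_comm d1r tv1', dotProduct_comm d1l tv2'] at hI2'
      have h3 := hI3 t
      have h4 := hI4 t
      -- pure algebra
      linear_combination 2 * hX - (2 * a1 * (d3l ⬝ᵥ tv1 t)) * hc1
        - (2 * a1 * (d2l ⬝ᵥ tv1 t)) * hc2 - (2 * a2 * (d3r ⬝ᵥ tv2 t)) * hc3
        + (2 * a2 * (d2r ⬝ᵥ tv2 t)) * hc4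
        - (2 * a1 * (d3r ⬝ᵥ tv1 t)) * hI1' + (2 * a1 * (d2r ⬝ᵥ tv1 t)) * hI2'
        - (2 * (tv2' ⬝ᵥ el)) * h4 - (2 * (tv2' ⬝ᵥ d1l)) * h3
    rw [← hzero]
    exact hbig
  -- conclude: E is constant
  intro t s
  exact is_const_of_deriv_eq_zero (fun x => (key x).differentiableAt)
    (fun x => (key x).deriv) t s
end

section
/- Assume the two-block SBP setup. Let L be the 2×2m matrix whose rows are (e_rᵀ, −e_lᵀ) and (d_{1;r}ᵀ, d_{1;l}ᵀ); assume L H̄⁻¹ Lᵀ is invertible and let P be the associated 2m×2m projection. Let w = (v⁽¹⁾; v⁽²⁾) : ℝ → ℝ^{2m} be twice continuously differentiable, write P w(t) = (ṽ⁽¹⁾(t); ṽ⁽²⁾(t)), and assume that for all t the system diag(b⁽¹⁾, b⁽²⁾)-blockwise equation holds: (b⁽¹⁾ (v⁽¹⁾)″; b⁽²⁾ (v⁽²⁾)″) = −P diag(a⁽¹⁾ D₄, a⁽²⁾ D₄) P w + P S(P w), where S applied to (ṽ⁽¹⁾; ṽ⁽²⁾) has first block −(1/2) H⁻¹ d_{1;r}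 (a⁽¹⁾ d_{2;r}ᵀ ṽ⁽¹⁾ + a⁽²⁾ d_{2;l}ᵀ ṽ⁽²⁾) + (1/2) H⁻¹ e_r (a⁽¹⁾ d_{3;r}ᵀ ṽ⁽¹⁾ + a⁽²⁾ d_{3;l}ᵀ ṽ⁽²⁾) and second block (1/2) H⁻¹ d_{1;l} (a⁽¹⁾ d_{2;r}ᵀ ṽ⁽¹⁾ + a⁽²⁾ d_{2;l}ᵀ ṽ⁽²⁾) + (1/2) H⁻¹ e_l (a⁽¹⁾ d_{3;r}ᵀ ṽ⁽¹⁾ + a⁽²⁾ d_{3;l}ᵀ ṽ⁽²⁾). Assume also the homogeneous discrete clamped conditions at the outer boundaries hold for the projected solution for all t: e_lᵀ ṽ⁽¹⁾(t) = 0, d_{1;l}ᵀ ṽ⁽¹⁾(t) = 0, e_rᵀ ṽ⁽²⁾(t) = 0, d_{1;r}ᵀ ṽ⁽²⁾(t) = 0. Then the energy E(t) = b⁽¹⁾ ‖(v⁽¹⁾)′‖²_H + b⁽²⁾ ‖(v⁽²⁾)′‖²_H + a⁽¹⁾ (ṽ⁽¹⁾)ᵀ N ṽ⁽¹⁾ +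 a⁽²⁾ (ṽ⁽²⁾)ᵀ N ṽ⁽²⁾ is non-negative and constant in t. (This is the energy stability of the hybrid SBP-SAT-projection interface coupling for the dynamic beam equation with piecewise constant coefficients, where the continuity of the solution and of its first derivative are imposed by projection and the remaining two interface conditions by SAT.) -/
open Matrix

private lemma hasDerivAt_dot_s15 {n : Type*} [Fintype n] {f g : ℝ → n → ℝ} {f' g' : n → ℝ} {t : ℝ}
    (hf : HasDerivAt f f' t) (hg : HasDerivAt g g' t) :
    HasDerivAt (fun s => f s ⬝ᵥ g s) (f' ⬝ᵥ g t + f t ⬝ᵥ g') t := by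
  have h : ∀ i ∈ Finset.univ, HasDerivAt (fun s => f s i * g s i)
      (f' i * g t i + f t i * g' i) t := fun i _ =>
    (hasDerivAt_pi.mp hf i).mul (hasDerivAt_pi.mp hg i)
  simpa [dotProduct, Finset.sum_add_distrib] using HasDerivAt.fun_sum h

private lemma hasDerivAt_mulVecFn {n k : Type*} [Fintype n] [Fintype k] (A : Matrix k n ℝ)
    {g : ℝ → n → ℝ} {g' : n → ℝ} {t : ℝ} (hg : HasDerivAt g g' t) :
    HasDerivAt (fun s => A *ᵥ g s) (A *ᵥ g') t := by
  rw [hasDerivAt_pi]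
  intro i
  have h : ∀ j ∈ Finset.univ, HasDerivAt (fun s => A i j * g s j) (A i j * g' j) t :=
    fun j _ => (hasDerivAt_pi.mp hg j).const_mul (A i j)
  simpa [mulVec, dotProduct] using HasDerivAt.fun_sum h

private lemma vmv_mulVec_s15 {n : Type*} [Fintype n] (u v x : n → ℝ) :
    vecMulVec u v *ᵥ x = (v ⬝ᵥ x) • u := by
  ext i
  simp [vecMulVec_apply, mulVec, dotProduct, Finset.mul_sum, mul_comm, mul_assoc, mul_left_comm]

private lemma dot_symm_s15 {n : Type*} [Fintype n] {A : Matrix n n ℝ} (hA : Aᵀ = A) (u v : n → ℝ) :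
    u ⬝ᵥ (A *ᵥ v) = (A *ᵥ u) ⬝ᵥ v := by
  rw [dotProduct_mulVec]
  nth_rewrite 1 [← hA]
  rw [vecMul_transpose]

private lemma elim_comp {n k : Type*} (z : n ⊕ k → ℝ) :
    z = Sum.elim (fun i => z (Sum.inl i)) (fun i => z (Sum.inr i)) := by
  funext x; cases x <;> rfl

private lemma fromBlocks_diag_mulVec {n : Type*} [Fintype n] (A B : Matrix n n ℝ) (x y : n → ℝ) :
    fromBlocks A 0 0 B *ᵥ Sum.elim x y = Sum.elim (A *ᵥ x) (B *ᵥ y) := by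
  rw [fromBlocks_mulVec]
  simp

/-- Energy stability of the hybrid SBP-SAT-projection interface coupling for
the dynamic beam equation with piecewise constant coefficients: continuity of
the solution and of its first derivative are imposed by projection, the
remaining two interface conditions by SAT. -/
theorem sbp_hybrid_interface_energy_stable
    (m : ℕ) (hm : 1 ≤ m)
    (H N : Matrix (Fin m) (Fin m) ℝ)
    (hHdiag : H.IsDiag) (hH : H.PosDef) (hN : N.PosSemidef)
    (el er d1l d1r d2l d2r d3l d3r : Fin m → ℝ)
    (D4 : Matrix (Fin m) (Fin m) ℝ)
    (hD4 : D4 = H⁻¹ * (N + vecMulVec el d3l + vecMulVec d1l d2l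
      + vecMulVec er d3r - vecMulVec d1r d2r))
    (a1 a2 b1 b2 : ℝ)
    (ha1 : 0 < a1) (ha2 : 0 < a2) (hb1 : 0 < b1) (hb2 : 0 < b2)
    (Hb : Matrix (Fin m ⊕ Fin m) (Fin m ⊕ Fin m) ℝ)
    (hHb : Hb = Matrix.fromBlocks H 0 0 H)
    (L : Matrix (Fin 2) (Fin m ⊕ Fin m) ℝ)
    (hL : L = Matrix.of ![Sum.elim er (-el), Sum.elim d1r d1l])
    (hLInv : IsUnit (L * Hb⁻¹ * Lᵀ))
    (P : Matrix (Fin m ⊕ Fin m) (Fin m ⊕ Fin m) ℝ)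
    (hP : P = 1 - Hb⁻¹ * Lᵀ * (L * Hb⁻¹ * Lᵀ)⁻¹ * L)
    (Dblk : Matrix (Fin m ⊕ Fin m) (Fin m ⊕ Fin m) ℝ)
    (hDblk : Dblk = Matrix.fromBlocks (a1 • D4) 0 0 (a2 • D4))
    (S : (Fin m ⊕ Fin m → ℝ) → (Fin m ⊕ Fin m → ℝ))
    (hS : ∀ x1 x2 : Fin m → ℝ, S (Sum.elim x1 x2) =
      Sum.elim
        (-(((a1 * (d2r ⬝ᵥ x1) + a2 * (d2l ⬝ᵥ x2)) / 2) • (H⁻¹ *ᵥ d1r))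
          + ((a1 * (d3r ⬝ᵥ x1) + a2 * (d3l ⬝ᵥ x2)) / 2) • (H⁻¹ *ᵥ er))
        (((a1 * (d2r ⬝ᵥ x1) + a2 * (d2l ⬝ᵥ x2)) / 2) • (H⁻¹ *ᵥ d1l)
          + ((a1 * (d3r ⬝ᵥ x1) + a2 * (d3l ⬝ᵥ x2)) / 2) • (H⁻¹ *ᵥ el)))
    (v1 v2 : ℝ → Fin m → ℝ) (hv1 : ContDiff ℝ 2 v1) (hv2 : ContDiff ℝ 2 v2)
    (w : ℝ → Fin m ⊕ Fin m → ℝ) (hw : ∀ t : ℝ, w t = Sum.elim (v1 t) (v2 t))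
    (hode : ∀ t : ℝ,
      Sum.elim (b1 • deriv (deriv v1) t) (b2 • deriv (deriv v2) t)
        = -((P * Dblk * P) *ᵥ w t) + P *ᵥ S (P *ᵥ w t))
    (tv1 tv2 : ℝ → Fin m → ℝ)
    (htv1 : ∀ t : ℝ, tv1 t = fun i => (P *ᵥ w t) (Sum.inl i))
    (htv2 : ∀ t : ℝ, tv2 t = fun i => (P *ᵥ w t) (Sum.inr i))
    -- homogeneous discrete clamped outer boundary conditions for the projected solution
    (hbc1 : ∀ t : ℝ, el ⬝ᵥ tv1 t = 0) (hbc2 : ∀ t : ℝ, d1l ⬝ᵥ tv1 t = 0)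
    (hbc3 : ∀ t : ℝ, er ⬝ᵥ tv2 t = 0) (hbc4 : ∀ t : ℝ, d1r ⬝ᵥ tv2 t = 0)
    (E : ℝ → ℝ)
    (hE : ∀ t : ℝ, E t =
      b1 * (deriv v1 t ⬝ᵥ (H *ᵥ deriv v1 t))
      + b2 * (deriv v2 t ⬝ᵥ (H *ᵥ deriv v2 t))
      + a1 * (tv1 t ⬝ᵥ (N *ᵥ tv1 t))
      + a2 * (tv2 t ⬝ᵥ (N *ᵥ tv2 t))) :
    (∀ t : ℝ, 0 ≤ E t) ∧ (∀ t s : ℝ, E t = E s) := by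

  -- ## basic symmetry and invertibility facts
  have hHsymm : Hᵀ = H := by
    ext i j
    by_cases h : i = j
    · subst h; rfl
    · rw [transpose_apply, hHdiag (Ne.symm h), hHdiag h]
  have hNsymm : Nᵀ = N := by
    ext i j
    have := congrFun (congrFun hN.1 i) j
    simpa [conjTranspose_apply] using this
  have hHdet : IsUnit H.det := hH.det_pos.ne'.isUnit
  have hHH : H * H⁻¹ = 1 := Matrix.mul_nonsing_inv H hHdet
  have hHbsymm : Hbᵀ = Hb := by
    rw [hHb, fromBlocks_transpose, hHsymm]; simp
  have hHbdet : IsUnit Hb.det := by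
    rw [hHb, det_fromBlocks_zero₂₁]; exact hHdet.mul hHdet
  have hHbiHb : Hb⁻¹ * Hb = 1 := Matrix.nonsing_inv_mul Hb hHbdet
  have hHbHbi : Hb * Hb⁻¹ = 1 := Matrix.mul_nonsing_inv Hb hHbdet
  have hHbisymm : Hb⁻¹ᵀ = Hb⁻¹ := by rw [transpose_nonsing_inv, hHbsymm]
  have hMdet : IsUnit (L * Hb⁻¹ * Lᵀ).det := (Matrix.isUnit_iff_isUnit_det _).mp hLInv
  have hMsymm : (L * Hb⁻¹ * Lᵀ)ᵀ = L * Hb⁻¹ * Lᵀ := by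
    rw [transpose_mul, transpose_mul, transpose_transpose, hHbisymm, ← Matrix.mul_assoc]
  have hMisymm : ((L * Hb⁻¹ * Lᵀ)⁻¹)ᵀ = (L * Hb⁻¹ * Lᵀ)⁻¹ := by
    rw [transpose_nonsing_inv, hMsymm]
  have hMMi : (L * Hb⁻¹ * Lᵀ) * (L * Hb⁻¹ * Lᵀ)⁻¹ = 1 := Matrix.mul_nonsing_inv _ hMdet
  have hLP : L * P = 0 := by
    rw [hP, Matrix.mul_sub, Matrix.mul_one]
    have h : L * (Hb⁻¹ * Lᵀ * (L * Hb⁻¹ * Lᵀ)⁻¹ * L)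
        = (L * Hb⁻¹ * Lᵀ) * (L * Hb⁻¹ * Lᵀ)⁻¹ * L := by
      simp only [Matrix.mul_assoc]
    rw [h, hMMi, Matrix.one_mul, sub_self]
  have h1 : Hb * P = Hb - Lᵀ * (L * Hb⁻¹ * Lᵀ)⁻¹ * L := by
    rw [hP, Matrix.mul_sub, Matrix.mul_one]
    congr 1
    simp only [← Matrix.mul_assoc]
    rw [hHbHbi, Matrix.one_mul]
  have h2 : Pᵀ * Hb = Hb - Lᵀ * (L * Hb⁻¹ * Lᵀ)⁻¹ * L := by
    rw [hP, transpose_sub, transpose_one, Matrix.sub_mul, Matrix.one_mul]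
    congr 1
    simp only [transpose_mul, transpose_transpose, hHbisymm, hMisymm]
    simp only [Matrix.mul_assoc, hHbiHb, Matrix.mul_one]
  have hPtHb : Pᵀ * Hb = Hb * P := h2.trans h1.symm
  -- ## differentiability
  have hv1' : Differentiable ℝ v1 := hv1.differentiable (by norm_num)
  have hv2' : Differentiable ℝ v2 := hv2.differentiable (by norm_num)
  have hdv1 : Differentiable ℝ (deriv v1) := by
    have h2 : ContDiff ℝ ((1 : WithTop ℕ∞) + 1) v1 := by
      have e : ((1 : WithTop ℕ∞) + 1) = 2 := by norm_num
      rw [e]; exact hv1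
    rw [contDiff_succ_iff_deriv] at h2
    exact h2.2.2.differentiable one_ne_zero
  have hdv2 : Differentiable ℝ (deriv v2) := by
    have h2 : ContDiff ℝ ((1 : WithTop ℕ∞) + 1) v2 := by
      have e : ((1 : WithTop ℕ∞) + 1) = 2 := by norm_num
      rw [e]; exact hv2
    rw [contDiff_succ_iff_deriv] at h2
    exact h2.2.2.differentiable one_ne_zero
  set wd : ℝ → (Fin m ⊕ Fin m → ℝ) := fun s => Sum.elim (deriv v1 s) (deriv v2 s) with hwd
  have hwD : ∀ t : ℝ, HasDerivAt w (wd t) t := by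
    intro t
    have hwe : w = fun s => Sum.elim (v1 s) (v2 s) := funext hw
    rw [hwe, hasDerivAt_pi]
    intro k
    cases k with
    | inl i => exact hasDerivAt_pi.mp ((hv1' t).hasDerivAt) i
    | inr i => exact hasDerivAt_pi.mp ((hv2' t).hasDerivAt) i
  have htw : ∀ t : ℝ, P *ᵥ w t = Sum.elim (tv1 t) (tv2 t) := by
    intro t
    funext k
    cases k with
    | inl i => simp only [Sum.elim_inl, htv1 t]
    | inr i => simp only [Sum.elim_inr, htv2 t]
  have htvD1 : ∀ t : ℝ, HasDerivAt tv1 (fun i => (P *ᵥ wd t) (Sum.inl i)) t := by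
    intro t
    have hfun : tv1 = fun s => (fun i => (P *ᵥ w s) (Sum.inl i)) := funext htv1
    have hPw : HasDerivAt (fun s => P *ᵥ w s) (P *ᵥ wd t) t := hasDerivAt_mulVecFn P (hwD t)
    rw [hfun]
    exact hasDerivAt_pi.mpr (fun i => hasDerivAt_pi.mp hPw (Sum.inl i))
  have htvD2 : ∀ t : ℝ, HasDerivAt tv2 (fun i => (P *ᵥ wd t) (Sum.inr i)) t := by
    intro t
    have hfun : tv2 = fun s => (fun i => (P *ᵥ w s) (Sum.inr i)) := funext htv2
    have hPw : HasDerivAt (fun s => P *ᵥ w s) (P *ᵥ wd t) t := hasDerivAt_mulVecFn P (hwD t)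
    rw [hfun]
    exact hasDerivAt_pi.mpr (fun i => hasDerivAt_pi.mp hPw (Sum.inr i))
  -- ## boundary conditions for derivatives
  have hbcD : ∀ (c : Fin m → ℝ) (tv : ℝ → Fin m → ℝ) (dtv : Fin m → ℝ) (t : ℝ),
      HasDerivAt tv dtv t → (∀ s : ℝ, c ⬝ᵥ tv s = 0) → c ⬝ᵥ dtv = 0 := by
    intro c tv dtv t hD hz
    have hd : HasDerivAt (fun s => c ⬝ᵥ tv s) ((0 : Fin m → ℝ) ⬝ᵥ tv t + c ⬝ᵥ dtv) t :=
      hasDerivAt_dot_s15 (hasDerivAt_const t c) hD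
    have h0 : (fun s => c ⬝ᵥ tv s) = fun _ => (0 : ℝ) := funext hz
    rw [h0] at hd
    have := hd.unique (hasDerivAt_const t 0)
    simpa using this
  have hz1' : ∀ t : ℝ, el ⬝ᵥ (fun i => (P *ᵥ wd t) (Sum.inl i)) = 0 :=
    fun t => hbcD el tv1 _ t (htvD1 t) hbc1
  have hz2' : ∀ t : ℝ, d1l ⬝ᵥ (fun i => (P *ᵥ wd t) (Sum.inl i)) = 0 :=
    fun t => hbcD d1l tv1 _ t (htvD1 t) hbc2
  have hz3' : ∀ t : ℝ, er ⬝ᵥ (fun i => (P *ᵥ wd t) (Sum.inr i)) = 0 :=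
    fun t => hbcD er tv2 _ t (htvD2 t) hbc3
  have hz4' : ∀ t : ℝ, d1r ⬝ᵥ (fun i => (P *ᵥ wd t) (Sum.inr i)) = 0 :=
    fun t => hbcD d1r tv2 _ t (htvD2 t) hbc4
  -- ## interface conditions from L P = 0
  have hLrow0 : ∀ u v : Fin m → ℝ, (L *ᵥ Sum.elim u v) 0 = er ⬝ᵥ u - el ⬝ᵥ v := by
    intro u v
    rw [hL]
    show (fun j => Matrix.of ![Sum.elim er (-el), Sum.elim d1r d1l] 0 j) ⬝ᵥ Sum.elim u v = _
    simp [sumElim_dotProduct_sumElim, neg_dotProduct, sub_eq_add_neg]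
  have hLrow1 : ∀ u v : Fin m → ℝ, (L *ᵥ Sum.elim u v) 1 = d1r ⬝ᵥ u + d1l ⬝ᵥ v := by
    intro u v
    rw [hL]
    show (fun j => Matrix.of ![Sum.elim er (-el), Sum.elim d1r d1l] 1 j) ⬝ᵥ Sum.elim u v = _
    simp [sumElim_dotProduct_sumElim]
  have hintf : ∀ x : Fin m ⊕ Fin m → ℝ,
      (er ⬝ᵥ (fun i => (P *ᵥ x) (Sum.inl i)) = el ⬝ᵥ (fun i => (P *ᵥ x) (Sum.inr i))) ∧
      (d1r ⬝ᵥ (fun i => (P *ᵥ x) (Sum.inl i)) + d1l ⬝ᵥ (fun i => (P *ᵥ x) (Sum.inr i)) = 0) := by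
    intro x
    have hLPx : L *ᵥ (P *ᵥ x) = 0 := by rw [mulVec_mulVec, hLP, zero_mulVec]
    have hy := elim_comp (P *ᵥ x)
    constructor
    · have h0 := congrFun hLPx 0
      rw [hy, hLrow0] at h0
      simp only [Pi.zero_apply] at h0
      linarith
    · have h0 := congrFun hLPx 1
      rw [hy, hLrow1] at h0
      simpa using h0
  have hi1' : ∀ t : ℝ, er ⬝ᵥ (fun i => (P *ᵥ wd t) (Sum.inl i))
      = el ⬝ᵥ (fun i => (P *ᵥ wd t) (Sum.inr i)) := fun t => (hintf (wd t)).1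
  have hi2' : ∀ t : ℝ, d1r ⬝ᵥ (fun i => (P *ᵥ wd t) (Sum.inl i))
      + d1l ⬝ᵥ (fun i => (P *ᵥ wd t) (Sum.inr i)) = 0 := fun t => (hintf (wd t)).2
  -- ## key dot-product identities
  have hPmove : ∀ u z : Fin m ⊕ Fin m → ℝ,
      (P *ᵥ u) ⬝ᵥ (Hb *ᵥ z) = u ⬝ᵥ (Hb *ᵥ (P *ᵥ z)) := by
    intro u z
    calc (P *ᵥ u) ⬝ᵥ (Hb *ᵥ z) = (Hb *ᵥ z) ⬝ᵥ (P *ᵥ u) := dotProduct_comm _ _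
    _ = ((Hb *ᵥ z) ᵥ* P) ⬝ᵥ u := dotProduct_mulVec _ _ _
    _ = (Pᵀ *ᵥ (Hb *ᵥ z)) ⬝ᵥ u := by rw [mulVec_transpose]
    _ = ((Pᵀ * Hb) *ᵥ z) ⬝ᵥ u := by rw [mulVec_mulVec]
    _ = ((Hb * P) *ᵥ z) ⬝ᵥ u := by rw [hPtHb]
    _ = u ⬝ᵥ (Hb *ᵥ (P *ᵥ z)) := by rw [← mulVec_mulVec]; exact dotProduct_comm _ _
  have hHD4 : H * D4 = N + vecMulVec el d3l + vecMulVec d1l d2l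
      + vecMulVec er d3r - vecMulVec d1r d2r := by
    rw [hD4, ← Matrix.mul_assoc, hHH, one_mul]
  have hblock : ∀ x y : Fin m → ℝ, (D4 *ᵥ x) ⬝ᵥ (H *ᵥ y)
      = y ⬝ᵥ (N *ᵥ x) + (d3l ⬝ᵥ x) * (el ⬝ᵥ y) + (d2l ⬝ᵥ x) * (d1l ⬝ᵥ y)
        + (d3r ⬝ᵥ x) * (er ⬝ᵥ y) - (d2r ⬝ᵥ x) * (d1r ⬝ᵥ y) := by
    intro x y
    rw [dot_symm_s15 hHsymm, mulVec_mulVec, hHD4]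
    rw [sub_mulVec, add_mulVec, add_mulVec, add_mulVec, vmv_mulVec_s15, vmv_mulVec_s15, vmv_mulVec_s15]
    rw [sub_dotProduct, add_dotProduct, add_dotProduct, add_dotProduct,
      smul_dotProduct, smul_dotProduct, smul_dotProduct, smul_eq_mul, smul_eq_mul, smul_eq_mul,
      dotProduct_comm (N *ᵥ x) y]
    rw [vmv_mulVec_s15, smul_dotProduct, smul_eq_mul]
  have hHiH : ∀ u y : Fin m → ℝ, (H⁻¹ *ᵥ u) ⬝ᵥ (H *ᵥ y) = u ⬝ᵥ y := by
    intro u y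
    rw [dot_symm_s15 hHsymm, mulVec_mulVec, hHH, one_mulVec]
  -- ## derivative of the energy is zero
  have hderiv : ∀ t : ℝ, HasDerivAt E 0 t := by
    intro t
    have hd1 : HasDerivAt (deriv v1) (deriv (deriv v1) t) t := (hdv1 t).hasDerivAt
    have hd2 : HasDerivAt (deriv v2) (deriv (deriv v2) t) t := (hdv2 t).hasDerivAt
    have hk1 : HasDerivAt (fun s => deriv v1 s ⬝ᵥ (H *ᵥ deriv v1 s))
        (deriv (deriv v1) t ⬝ᵥ (H *ᵥ deriv v1 t) + deriv v1 t ⬝ᵥ (H *ᵥ deriv (deriv v1) t)) t :=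
      hasDerivAt_dot_s15 hd1 (hasDerivAt_mulVecFn H hd1)
    have hk2 : HasDerivAt (fun s => deriv v2 s ⬝ᵥ (H *ᵥ deriv v2 s))
        (deriv (deriv v2) t ⬝ᵥ (H *ᵥ deriv v2 t) + deriv v2 t ⬝ᵥ (H *ᵥ deriv (deriv v2) t)) t :=
      hasDerivAt_dot_s15 hd2 (hasDerivAt_mulVecFn H hd2)
    have hp1 : HasDerivAt (fun s => tv1 s ⬝ᵥ (N *ᵥ tv1 s))
        ((fun i => (P *ᵥ wd t) (Sum.inl i)) ⬝ᵥ (N *ᵥ tv1 t)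
          + tv1 t ⬝ᵥ (N *ᵥ (fun i => (P *ᵥ wd t) (Sum.inl i)))) t :=
      hasDerivAt_dot_s15 (htvD1 t) (hasDerivAt_mulVecFn N (htvD1 t))
    have hp2 : HasDerivAt (fun s => tv2 s ⬝ᵥ (N *ᵥ tv2 s))
        ((fun i => (P *ᵥ wd t) (Sum.inr i)) ⬝ᵥ (N *ᵥ tv2 t)
          + tv2 t ⬝ᵥ (N *ᵥ (fun i => (P *ᵥ wd t) (Sum.inr i)))) t :=
      hasDerivAt_dot_s15 (htvD2 t) (hasDerivAt_mulVecFn N (htvD2 t))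
    have hEfun : E = fun s => b1 * (deriv v1 s ⬝ᵥ (H *ᵥ deriv v1 s))
        + b2 * (deriv v2 s ⬝ᵥ (H *ᵥ deriv v2 s))
        + a1 * (tv1 s ⬝ᵥ (N *ᵥ tv1 s)) + a2 * (tv2 s ⬝ᵥ (N *ᵥ tv2 s)) := funext hE
    have htotal : HasDerivAt E
        (b1 * (deriv (deriv v1) t ⬝ᵥ (H *ᵥ deriv v1 t) + deriv v1 t ⬝ᵥ (H *ᵥ deriv (deriv v1) t))
        + b2 * (deriv (deriv v2) t ⬝ᵥ (H *ᵥ deriv v2 t) + deriv v2 t ⬝ᵥ (H *ᵥ deriv (deriv v2) t))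
        + a1 * ((fun i => (P *ᵥ wd t) (Sum.inl i)) ⬝ᵥ (N *ᵥ tv1 t)
          + tv1 t ⬝ᵥ (N *ᵥ (fun i => (P *ᵥ wd t) (Sum.inl i))))
        + a2 * ((fun i => (P *ᵥ wd t) (Sum.inr i)) ⬝ᵥ (N *ᵥ tv2 t)
          + tv2 t ⬝ᵥ (N *ᵥ (fun i => (P *ᵥ wd t) (Sum.inr i))))) t := by
      rw [hEfun]
      exact (((hk1.const_mul b1).add (hk2.const_mul b2)).add (hp1.const_mul a1)).add
        (hp2.const_mul a2)
    -- now show the derivative value is zero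
    have hsymK1 : deriv v1 t ⬝ᵥ (H *ᵥ deriv (deriv v1) t)
        = deriv (deriv v1) t ⬝ᵥ (H *ᵥ deriv v1 t) := by
      rw [dot_symm_s15 hHsymm, dotProduct_comm]
    have hsymK2 : deriv v2 t ⬝ᵥ (H *ᵥ deriv (deriv v2) t)
        = deriv (deriv v2) t ⬝ᵥ (H *ᵥ deriv v2 t) := by
      rw [dot_symm_s15 hHsymm, dotProduct_comm]
    have hsymN1 : tv1 t ⬝ᵥ (N *ᵥ (fun i => (P *ᵥ wd t) (Sum.inl i)))
        = (fun i => (P *ᵥ wd t) (Sum.inl i)) ⬝ᵥ (N *ᵥ tv1 t) := by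
      rw [dot_symm_s15 hNsymm, dotProduct_comm]
    have hsymN2 : tv2 t ⬝ᵥ (N *ᵥ (fun i => (P *ᵥ wd t) (Sum.inr i)))
        = (fun i => (P *ᵥ wd t) (Sum.inr i)) ⬝ᵥ (N *ᵥ tv2 t) := by
      rw [dot_symm_s15 hNsymm, dotProduct_comm]
    -- the ODE contracted against Hb wd
    have hHbwd : Hb *ᵥ wd t = Sum.elim (H *ᵥ deriv v1 t) (H *ᵥ deriv v2 t) := by
      rw [hHb]; exact fromBlocks_diag_mulVec H H _ _
    have hPwdelim : P *ᵥ wd t = Sum.elim (fun i => (P *ᵥ wd t) (Sum.inl i))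
        (fun i => (P *ᵥ wd t) (Sum.inr i)) := elim_comp _
    have hHbPwd : Hb *ᵥ (P *ᵥ wd t) = Sum.elim (H *ᵥ (fun i => (P *ᵥ wd t) (Sum.inl i)))
        (H *ᵥ (fun i => (P *ᵥ wd t) (Sum.inr i))) := by
      rw [hPwdelim, hHb]; exact fromBlocks_diag_mulVec H H _ _
    have hLHS : Sum.elim (b1 • deriv (deriv v1) t) (b2 • deriv (deriv v2) t) ⬝ᵥ (Hb *ᵥ wd t)
        = b1 * (deriv (deriv v1) t ⬝ᵥ (H *ᵥ deriv v1 t))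
          + b2 * (deriv (deriv v2) t ⬝ᵥ (H *ᵥ deriv v2 t)) := by
      rw [hHbwd, sumElim_dotProduct_sumElim, smul_dotProduct, smul_dotProduct,
        smul_eq_mul, smul_eq_mul]
    have hT1 : ((P * Dblk * P) *ᵥ w t) ⬝ᵥ (Hb *ᵥ wd t)
        = a1 * ((fun i => (P *ᵥ wd t) (Sum.inl i)) ⬝ᵥ (N *ᵥ tv1 t)
            + (d3l ⬝ᵥ tv1 t) * (el ⬝ᵥ (fun i => (P *ᵥ wd t) (Sum.inl i)))
            + (d2l ⬝ᵥ tv1 t) * (d1l ⬝ᵥ (fun i => (P *ᵥ wd t) (Sum.inl i)))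
            + (d3r ⬝ᵥ tv1 t) * (er ⬝ᵥ (fun i => (P *ᵥ wd t) (Sum.inl i)))
            - (d2r ⬝ᵥ tv1 t) * (d1r ⬝ᵥ (fun i => (P *ᵥ wd t) (Sum.inl i))))
        + a2 * ((fun i => (P *ᵥ wd t) (Sum.inr i)) ⬝ᵥ (N *ᵥ tv2 t)
            + (d3l ⬝ᵥ tv2 t) * (el ⬝ᵥ (fun i => (P *ᵥ wd t) (Sum.inr i)))
            + (d2l ⬝ᵥ tv2 t) * (d1l ⬝ᵥ (fun i => (P *ᵥ wd t) (Sum.inr i)))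
            + (d3r ⬝ᵥ tv2 t) * (er ⬝ᵥ (fun i => (P *ᵥ wd t) (Sum.inr i)))
            - (d2r ⬝ᵥ tv2 t) * (d1r ⬝ᵥ (fun i => (P *ᵥ wd t) (Sum.inr i)))) := by
      have e1 : (P * Dblk * P) *ᵥ w t = P *ᵥ (Dblk *ᵥ (P *ᵥ w t)) := by
        rw [mulVec_mulVec, mulVec_mulVec, Matrix.mul_assoc]
      rw [e1, hPmove, htw t, hDblk, fromBlocks_diag_mulVec, hHbPwd,
        sumElim_dotProduct_sumElim, smul_mulVec, smul_mulVec,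
        smul_dotProduct, smul_dotProduct, smul_eq_mul, smul_eq_mul,
        hblock (tv1 t) _, hblock (tv2 t) _]
    have hT2 : (P *ᵥ S (P *ᵥ w t)) ⬝ᵥ (Hb *ᵥ wd t)
        = -((a1 * (d2r ⬝ᵥ tv1 t) + a2 * (d2l ⬝ᵥ tv2 t)) / 2)
            * (d1r ⬝ᵥ (fun i => (P *ᵥ wd t) (Sum.inl i)))
          + ((a1 * (d3r ⬝ᵥ tv1 t) + a2 * (d3l ⬝ᵥ tv2 t)) / 2)
            * (er ⬝ᵥ (fun i => (P *ᵥ wd t) (Sum.inl i)))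
          + (((a1 * (d2r ⬝ᵥ tv1 t) + a2 * (d2l ⬝ᵥ tv2 t)) / 2)
            * (d1l ⬝ᵥ (fun i => (P *ᵥ wd t) (Sum.inr i)))
          + ((a1 * (d3r ⬝ᵥ tv1 t) + a2 * (d3l ⬝ᵥ tv2 t)) / 2)
            * (el ⬝ᵥ (fun i => (P *ᵥ wd t) (Sum.inr i)))) := by
      rw [hPmove, htw t, hS (tv1 t) (tv2 t), hHbPwd, sumElim_dotProduct_sumElim,
        add_dotProduct, add_dotProduct, neg_dotProduct,
        smul_dotProduct, smul_dotProduct, smul_dotProduct, smul_dotProduct,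
        smul_eq_mul, smul_eq_mul, smul_eq_mul, smul_eq_mul,
        hHiH, hHiH, hHiH, hHiH]
      ring
    have hode' := congrArg (fun z => z ⬝ᵥ (Hb *ᵥ wd t)) (hode t)
    rw [hLHS, add_dotProduct, neg_dotProduct, hT1, hT2] at hode'
    have hz : (b1 * (deriv (deriv v1) t ⬝ᵥ (H *ᵥ deriv v1 t) + deriv v1 t ⬝ᵥ (H *ᵥ deriv (deriv v1) t))
        + b2 * (deriv (deriv v2) t ⬝ᵥ (H *ᵥ deriv v2 t) + deriv v2 t ⬝ᵥ (H *ᵥ deriv (deriv v2) t))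
        + a1 * ((fun i => (P *ᵥ wd t) (Sum.inl i)) ⬝ᵥ (N *ᵥ tv1 t)
          + tv1 t ⬝ᵥ (N *ᵥ (fun i => (P *ᵥ wd t) (Sum.inl i))))
        + a2 * ((fun i => (P *ᵥ wd t) (Sum.inr i)) ⬝ᵥ (N *ᵥ tv2 t)
          + tv2 t ⬝ᵥ (N *ᵥ (fun i => (P *ᵥ wd t) (Sum.inr i))))) = 0 := by
      rw [hsymK1, hsymK2, hsymN1, hsymN2]
      linear_combination (2:ℝ) * hode'
        + (-2 * a1 * (d3l ⬝ᵥ tv1 t)) * hz1' t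
        + (-2 * a1 * (d2l ⬝ᵥ tv1 t)) * hz2' t
        + (-2 * a2 * (d3r ⬝ᵥ tv2 t)) * hz3' t
        + (2 * a2 * (d2r ⬝ᵥ tv2 t)) * hz4' t
        + (a2 * (d3l ⬝ᵥ tv2 t) - a1 * (d3r ⬝ᵥ tv1 t)) * hi1' t
        + (a1 * (d2r ⬝ᵥ tv1 t) - a2 * (d2l ⬝ᵥ tv2 t)) * hi2' t
    exact hz ▸ htotal
  -- ## conclusion
  constructor
  · intro t
    rw [hE t]
    have q1 := hH.posSemidef.dotProduct_mulVec_nonneg (deriv v1 t)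
    have q2 := hH.posSemidef.dotProduct_mulVec_nonneg (deriv v2 t)
    have q3 := hN.dotProduct_mulVec_nonneg (tv1 t)
    have q4 := hN.dotProduct_mulVec_nonneg (tv2 t)
    have := mul_nonneg hb1.le q1
    positivity
  · intro t s
    exact is_const_of_deriv_eq_zero (fun u => (hderiv u).differentiableAt)
      (fun u => (hderiv u).deriv) t s
end

section
/- For every real number x with −12 < x < 0 one has |2 + x + x²/12| < 2. Consequently, if λ < 0 and k > 0 are real numbers with k² · (−λ) < 12, then every sequence (v_n)_{n ≥ 0} of real numbers satisfying the recurrence v_{n+1} = (2 + k² λ + k⁴ λ²/12) v_n − v_{n−1} for all n ≥ 1 is bounded. -/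
/-! The amplification factor `a = 2 + x + x²/12`, with `x = k²λ`, satisfies `|a| < 2` because
`a = (x + 6)²/12 - 1` and `a - 2 = x (x + 12)/12`. For the recurrence `v (n + 2) = a v (n + 1) - v n`
the quadratic form `v (n + 1)² - a v (n + 1) v n + v n²` is conserved, and for `|a| < 2` it is
positive definite, so it bounds `v n²`. -/

theorem abs_two_add_add_sq_div_twelve_lt_two {x : ℝ} (hlo : -12 < x) (hhi : x < 0) :
    |2 + x + x ^ 2 / 12| < 2 := by
  rw [abs_lt]
  constructor
  · nlinarith [sq_nonneg (x + 6)]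
  · nlinarith [mul_pos (by linarith : (0 : ℝ) < 12 + x) (by linarith : (0 : ℝ) < -x)]

theorem two_sub_abs_mul_sq_le {a : ℝ} (ha : |a| ≤ 2) (x y : ℝ) :
    (2 - |a|) * y ^ 2 ≤ 2 * (x ^ 2 - a * x * y + y ^ 2) := by
  have hxy : 2 * (a * x * y) ≤ |a| * (x ^ 2 + y ^ 2) := by
    calc 2 * (a * x * y) ≤ |2 * (a * x * y)| := le_abs_self _
      _ = |a| * (2 * |x| * |y|) := by simp only [abs_mul, abs_two]; ring
      _ ≤ |a| * (x ^ 2 + y ^ 2) := by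
          gcongr
          nlinarith [sq_nonneg (|x| - |y|), sq_abs x, sq_abs y]
  nlinarith [mul_nonneg (sub_nonneg.2 ha) (sq_nonneg x)]

section TwoStepRecurrence

variable {a : ℝ} {v : ℕ → ℝ}

theorem two_step_recurrence_invariant (hv : ∀ n, v (n + 2) = a * v (n + 1) - v n) (n : ℕ) :
    v (n + 1) ^ 2 - a * v (n + 1) * v n + v n ^ 2 = v 1 ^ 2 - a * v 1 * v 0 + v 0 ^ 2 := by
  induction n with
  | zero => rfl
  | succ n ih => rw [← ih, hv]; ring

theorem exists_abs_le_of_two_step_recurrence (ha : |a| < 2)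
    (hv : ∀ n, v (n + 2) = a * v (n + 1) - v n) : ∃ C, ∀ n, |v n| ≤ C := by
  refine ⟨√(2 * (v 1 ^ 2 - a * v 1 * v 0 + v 0 ^ 2) / (2 - |a|)), fun n ↦ Real.abs_le_sqrt ?_⟩
  rw [le_div_iff₀ (by linarith), mul_comm, ← two_step_recurrence_invariant hv n]
  exact two_sub_abs_mul_sq_le ha.le _ _

end TwoStepRecurrence

/-- Stability of the explicit fourth-order two-step time-integration scheme:
for `−12 < x < 0` one has `|2 + x + x²/12| < 2`, and consequently the scalar
recurrence `v_{n+1} = (2 + k²λ + k⁴λ²/12) v_n − v_{n−1}` is bounded whenever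
`λ < 0`, `k > 0` and `k²(−λ) < 12`. -/
theorem time_stepping_stability :
    (∀ x : ℝ, -12 < x → x < 0 → |2 + x + x ^ 2 / 12| < 2) ∧
    (∀ (lam k : ℝ) (v : ℕ → ℝ), lam < 0 → 0 < k → k ^ 2 * (-lam) < 12 →
      (∀ n : ℕ, 1 ≤ n →
        v (n + 1) = (2 + k ^ 2 * lam + k ^ 4 * lam ^ 2 / 12) * v n - v (n - 1)) →
      ∃ C : ℝ, ∀ n : ℕ, |v n| ≤ C) := by
  refine ⟨fun _ ↦ abs_two_add_add_sq_div_twelve_lt_two, fun lam k v hlam hk hk12 hrec ↦ ?_⟩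
  have hneg : k ^ 2 * lam < 0 := mul_neg_of_pos_of_neg (pow_pos hk 2) hlam
  have hamp := abs_two_add_add_sq_div_twelve_lt_two (by linarith) hneg
  refine exists_abs_le_of_two_step_recurrence (a := 2 + k ^ 2 * lam + k ^ 4 * lam ^ 2 / 12) ?_ ?_
  · convert hamp using 3; ring
  · intro n
    simpa using hrec (n + 1) (by omega)
end
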